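/- arXiv:1904.01320 — 7 statements merged into one kernel-verified Lean document; each statement's English description precedes it below -/
import Mathlib

section
/- Let (Y_i)_{i≥1} be a sequence of i.i.d. integrable real random variables with mean m = E[Y_1], and let T > 0. Then sup_{t ∈ [0,T]} | (1/n) ∑_{i=1}^{⌊nt⌋} Y_i − t·m | → 0 almost surely as n → ∞ (functional strong law of large numbers with uniform convergence over the time interval). -/
open MeasureTheory ProbabilityTheory Filter Finset Asymptotics Topology

/-!
By the strong law of large numbers, `S k / k → m` almost surely, where `S k = ∑_{i<k} Y i`;
on each such sample path the claim is deterministic. With `k = ⌊n t⌋`, the error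
`S k / n - t m` is `(S k - k m) / n` plus a rounding term `(k - n t) m / n` of size at most
`|m| / n`. Since `S k - k m = o(k)`, its maximum over `k ≤ n T` is `o(n)`, which makes the
first term small uniformly in `t ∈ [0, T]`.
-/

lemma eventually_forall_abs_le_of_isLittleO {a : ℕ → ℝ}
    (ha : a =o[atTop] (fun k => (k : ℝ))) (T : ℝ) {ε : ℝ} (hε : 0 < ε) :
    ∀ᶠ n : ℕ in atTop, ∀ k : ℕ, (k : ℝ) ≤ n * T → |a k| ≤ ε * n := by
  have hδ : 0 < ε / (|T| + 1) := by positivity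
  obtain ⟨N, hN⟩ := eventually_atTop.1 (ha.def hδ)
  set C := ∑ k ∈ range N, |a k|
  filter_upwards [tendsto_natCast_atTop_atTop.eventually_ge_atTop (C / ε)] with n hn k hk
  rcases lt_or_ge k N with hkN | hkN
  · calc |a k| ≤ C := single_le_sum (f := fun k => |a k|) (fun _ _ => abs_nonneg _)
          (mem_range.2 hkN)
      _ ≤ ε * n := by rwa [div_le_iff₀ hε, mul_comm] at hn
  · have hkT : (k : ℝ) ≤ n * (|T| + 1) := hk.trans (by gcongr; linarith [le_abs_self T])
    calc |a k| ≤ ε / (|T| + 1) * k := by simpa using hN k hkN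
      _ ≤ ε / (|T| + 1) * (n * (|T| + 1)) := by gcongr
      _ = ε * n := by field_simp

lemma abs_div_floor_sub_mul_le (s : ℕ → ℝ) (m : ℝ) {n : ℕ} (hn : 0 < n) {t : ℝ}
    (ht : 0 ≤ t) :
    |(1 / (n : ℝ)) * s ⌊(n : ℝ) * t⌋₊ - t * m|
      ≤ (|s ⌊(n : ℝ) * t⌋₊ - ⌊(n : ℝ) * t⌋₊ * m| + |m|) / n := by
  set k := ⌊(n : ℝ) * t⌋₊
  have hnpos : (0 : ℝ) < n := by exact_mod_cast hn
  have hround : |((k : ℝ) - n * t) * m| ≤ |m| := by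
    rw [abs_mul]
    refine mul_le_of_le_one_left (abs_nonneg m) (abs_le.2 ⟨?_, ?_⟩)
    · linarith [Nat.lt_floor_add_one ((n : ℝ) * t)]
    · linarith [Nat.floor_le (by positivity : 0 ≤ (n : ℝ) * t)]
  have hsplit : (1 / (n : ℝ)) * s k - t * m = ((s k - k * m) + (k - n * t) * m) / n := by
    field_simp
    ring
  rw [hsplit, abs_div, abs_of_pos hnpos]
  gcongr
  exact (abs_add_le _ _).trans (by gcongr)

theorem tendsto_iSup_Icc_floor_scaling_of_tendsto_div {s : ℕ → ℝ} {m : ℝ}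
    (hs : Tendsto (fun k : ℕ => s k / k) atTop (𝓝 m)) (T : ℝ) :
    Tendsto (fun n : ℕ => ⨆ t : Set.Icc (0 : ℝ) T,
        |(1 / (n : ℝ)) * s ⌊(n : ℝ) * t⌋₊ - t * m|) atTop (𝓝 0) := by
  have ha : (fun k : ℕ => s k - k * m) =o[atTop] (fun k => (k : ℝ)) := by
    refine (isLittleO_iff_tendsto' ?_).2 ?_
    · filter_upwards [eventually_ne_atTop 0] with k hk hk0
      exact absurd hk0 (Nat.cast_ne_zero.2 hk)
    · refine (hs.sub_const m).congr' ?_ |>.trans (by rw [sub_self])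
      filter_upwards [eventually_ne_atTop 0] with k hk
      field_simp
  refine tendsto_order.2 ⟨fun b hb => Eventually.of_forall fun n =>
    hb.trans_le (Real.iSup_nonneg fun _ => abs_nonneg _), fun ε hε => ?_⟩
  filter_upwards [eventually_forall_abs_le_of_isLittleO ha T (half_pos hε),
    tendsto_natCast_atTop_atTop.eventually_gt_atTop (2 * |m| / ε),
    eventually_gt_atTop 0] with n hsmall hlarge hn
  have hnpos : (0 : ℝ) < n := by exact_mod_cast hn
  have hm : |m| / n < ε / 2 := by
    rw [div_lt_iff₀ hε] at hlarge
    rw [div_lt_iff₀ hnpos]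
    linarith
  refine lt_of_le_of_lt (Real.iSup_le (fun ⟨t, ht0, htT⟩ => ?_) (by positivity))
    (show ε / 2 + |m| / n < ε by linarith)
  refine (abs_div_floor_sub_mul_le s m hn ht0).trans ?_
  have hk := hsmall ⌊(n : ℝ) * t⌋₊ ((Nat.floor_le (by positivity)).trans (by gcongr))
  rw [add_div]
  linarith [(div_le_iff₀ hnpos).2 hk]

theorem functional_slln_general
    {Ω : Type*} [MeasurableSpace Ω] (μ : Measure Ω)
    (Y : ℕ → Ω → ℝ)
    (hindep : iIndepFun Y μ)
    (hident : ∀ i, IdentDistrib (Y i) (Y 0) μ μ)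
    (hint : Integrable (Y 0) μ)
    (m : ℝ) (hm : m = ∫ ω, Y 0 ω ∂μ)
    (T : ℝ) :
    ∀ᵐ ω ∂μ,
      Tendsto
        (fun n : ℕ =>
          ⨆ t : Set.Icc (0 : ℝ) T,
            |(1 / (n : ℝ)) * ∑ i ∈ Finset.range ⌊(n : ℝ) * (t : ℝ)⌋₊, Y i ω
              - (t : ℝ) * m|)
        atTop (nhds 0) := by
  have hpair : Pairwise (Function.onFun (IndepFun · · μ) Y) :=
    fun i j hij => hindep.indepFun hij
  subst hm
  filter_upwards [strong_law_ae_real Y hint hpair hident] with ω hω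
  exact tendsto_iSup_Icc_floor_scaling_of_tendsto_div hω T

/-- Functional strong law of large numbers: for an i.i.d. integrable sequence
`(Y i)` with mean `m`, the partial-sum process `t ↦ (1/n) ∑_{i=1}^{⌊nt⌋} Y_i`
converges almost surely to `t ↦ t·m`, uniformly over `t ∈ [0, T]`. -/
theorem functional_slln
    {Ω : Type*} [MeasurableSpace Ω] (μ : Measure Ω) [IsProbabilityMeasure μ]
    (Y : ℕ → Ω → ℝ)
    (hmeas : ∀ i, Measurable (Y i))
    (hindep : iIndepFun Y μ)
    (hident : ∀ i, IdentDistrib (Y i) (Y 0) μ μ)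
    (hint : Integrable (Y 0) μ)
    (m : ℝ) (hm : m = ∫ ω, Y 0 ω ∂μ)
    (T : ℝ) (hT : 0 < T) :
    ∀ᵐ ω ∂μ,
      Tendsto
        (fun n : ℕ =>
          ⨆ t : Set.Icc (0 : ℝ) T,
            |(1 / (n : ℝ)) * ∑ i ∈ Finset.range ⌊(n : ℝ) * (t : ℝ)⌋₊, Y i ω
              - (t : ℝ) * m|)
        atTop (nhds 0) :=
  functional_slln_general μ Y hindep hident hint m hm T
end

section
/- Let (X_i)_{i≥1} be i.i.d. real random variables with E[|X_1|^4] < ∞, and fix reals 0 < h ≤ T − h with T > 0. For k ∈ {1,2,3,4} and n ≥ 1 define the windowed empirical k-th moment μ̂^{⟨k⟩}_n(t) = (1/(nh)) ∑_{i=⌊n(t−h)⌋+1}^{⌊nt⌋} X_i^k for t ∈ [h, T]. Then for each k ∈ {1,2,3,4}, sup_{t ∈ [h,T]} | μ̂^{⟨k⟩}_n(t) − E[X_1^k] | → 0 almost surely as n → ∞. -/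
open MeasureTheory ProbabilityTheory Filter Finset

/-! The strong law makes the running means of `X_i^k` converge to `E[X_1^k]`; the argument is
then deterministic. Writing `D m = ∑_{i<m} y_i - m E`, convergence of the running means says
`D m = o(m)`, i.e. `|D m| ≤ C_ε + ε m` for every `ε > 0`. The window sum over `(n(t-h), nt]`
is `D ⌊nt⌋ - D ⌊n(t-h)⌋` plus `E` times the window length, which is `nh` up to rounding, so
the windowed mean differs from `E` by at most `(2 C_ε + |E|)/(nh) + 2εT/h`, uniformly in
`t ∈ [h, T]`. -/

/-- The windowed empirical `k`-th moment of the i.i.d. sequence `(X i)`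
over the moving window `(t-h, t]`, i.e. `(1/(nh)) ∑_{⌊n(t-h)⌋ < i ≤ ⌊nt⌋} X_i^k`
(sequence indexed from 0 here, so the sum runs over `⌊n(t-h)⌋ ≤ i < ⌊nt⌋`). -/
noncomputable def windowedMoment (n : ℕ) (h t : ℝ) (k : ℕ) (x : ℕ → ℝ) : ℝ :=
  (∑ i ∈ Finset.Ico ⌊(n : ℝ) * (t - h)⌋₊ ⌊(n : ℝ) * t⌋₊, (x i) ^ k) / ((n : ℝ) * h)

theorem abs_pow_le_one_add_abs_pow (x : ℝ) {k m : ℕ} (hkm : k ≤ m) :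
    |x| ^ k ≤ 1 + |x| ^ m := by
  rcases le_total |x| 1 with hx | hx
  · linarith [pow_le_one₀ (n := k) (abs_nonneg x) hx, pow_nonneg (abs_nonneg x) m]
  · linarith [pow_le_pow_right₀ hx hkm]

theorem integrable_pow_of_integrable_abs_pow {Ω : Type*} [MeasurableSpace Ω] {μ : Measure Ω}
    [IsFiniteMeasure μ] {f : Ω → ℝ} (hf : AEStronglyMeasurable f μ) {k m : ℕ}
    (hm : Integrable (fun ω => |f ω| ^ m) μ) (hkm : k ≤ m) :
    Integrable (fun ω => f ω ^ k) μ :=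
  ((integrable_const 1).add hm).mono' (hf.pow k) <| Eventually.of_forall fun ω => by
    simpa only [Real.norm_eq_abs, abs_pow, Pi.add_apply] using abs_pow_le_one_add_abs_pow (f ω) hkm

theorem windowedMoment_one_pow (n : ℕ) (h t : ℝ) (k : ℕ) (x : ℕ → ℝ) :
    windowedMoment n h t 1 (fun i => x i ^ k) = windowedMoment n h t k x := by
  simp only [windowedMoment, pow_one]

theorem TendstoUniformlyOn.tendsto_iSup_dist {ι α β : Type*} [PseudoMetricSpace β]
    {F : ι → α → β} {f : α → β} {l : Filter ι} {s : Set α} (hF : TendstoUniformlyOn F f l s) :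
    Tendsto (fun i => ⨆ x : s, dist (F i x) (f x)) l (nhds 0) := by
  rw [Metric.tendstoUniformlyOn_iff] at hF
  refine tendsto_order.2 ⟨fun a ha => Eventually.of_forall fun i =>
    ha.trans_le (Real.iSup_nonneg fun _ => dist_nonneg), fun δ hδ => ?_⟩
  filter_upwards [hF (δ / 2) (half_pos hδ)] with i hi
  refine (Real.iSup_le (fun x => ?_) (half_pos hδ).le).trans_lt (half_lt_self hδ)
  rw [dist_comm]
  exact (hi x x.2).le

section Deterministic

variable (y : ℕ → ℝ) (E : ℝ)

def centeredPartialSum (m : ℕ) : ℝ :=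
  ∑ i ∈ range m, y i - m * E

variable {y E}

theorem exists_abs_centeredPartialSum_le
    (hy : Tendsto (fun m : ℕ => (∑ i ∈ range m, y i) / m) atTop (nhds E)) {ε : ℝ} (hε : 0 < ε) :
    ∃ C, ∀ m : ℕ, |centeredPartialSum y E m| ≤ C + ε * m := by
  have hdiv : Tendsto (fun m : ℕ => centeredPartialSum y E m / m) atTop (nhds 0) := by
    rw [← sub_self E]
    refine (hy.sub_const E).congr' ?_
    filter_upwards [eventually_gt_atTop 0] with m hm
    simp only [centeredPartialSum]
    field_simp
  obtain ⟨M, hM⟩ := Metric.tendsto_atTop.1 hdiv ε hε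
  refine ⟨∑ m ∈ range (M + 1), |centeredPartialSum y E m|, fun m => ?_⟩
  have hC : 0 ≤ ∑ m ∈ range (M + 1), |centeredPartialSum y E m| :=
    sum_nonneg fun _ _ => abs_nonneg _
  rcases le_or_gt m M with hmM | hMm
  · have hle := single_le_sum (f := fun m => |centeredPartialSum y E m|)
      (fun _ _ => abs_nonneg _) (mem_range.2 (Nat.lt_succ_of_le hmM))
    have hεm : 0 ≤ ε * m := by positivity
    linarith
  · have hm : (0 : ℝ) < m := by exact_mod_cast (Nat.zero_le M).trans_lt hMm
    have hlt := hM m hMm.le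
    rw [Real.dist_eq, sub_zero, abs_div, Nat.abs_cast, div_lt_iff₀ hm] at hlt
    linarith

theorem abs_windowedMoment_one_sub_le {n : ℕ} {h t : ℝ} (hn : 0 < n) (hh : 0 < h)
    (ht : h ≤ t) :
    |windowedMoment n h t 1 y - E| ≤
      (|centeredPartialSum y E ⌊(n : ℝ) * t⌋₊| + |centeredPartialSum y E ⌊(n : ℝ) * (t - h)⌋₊|
        + |E|) / (n * h) := by
  set a := ⌊(n : ℝ) * (t - h)⌋₊
  set b := ⌊(n : ℝ) * t⌋₊
  have hn' : (0 : ℝ) < n := by exact_mod_cast hn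
  have hnh : (0 : ℝ) < n * h := mul_pos hn' hh
  have hab : a ≤ b := Nat.floor_mono (by nlinarith)
  have hwidth : |(b : ℝ) - a - n * h| ≤ 1 := by
    have hb := Nat.floor_le (a := (n : ℝ) * t) (by nlinarith)
    have ha := Nat.floor_le (a := (n : ℝ) * (t - h)) (by nlinarith)
    have hb' := Nat.lt_floor_add_one ((n : ℝ) * t)
    have ha' := Nat.lt_floor_add_one ((n : ℝ) * (t - h))
    rw [abs_le]
    constructor <;> nlinarith
  have hsplit : windowedMoment n h t 1 y - E =
      (centeredPartialSum y E b - centeredPartialSum y E a + (b - a - n * h) * E) / (n * h) := by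
    rw [windowedMoment, sum_Ico_eq_sub _ hab]
    simp only [centeredPartialSum, pow_one]
    field_simp
    ring
  rw [hsplit, abs_div, abs_of_pos hnh]
  gcongr
  calc |centeredPartialSum y E b - centeredPartialSum y E a + (b - a - n * h) * E|
      ≤ |centeredPartialSum y E b| + |centeredPartialSum y E a| + |(b : ℝ) - a - n * h| * |E| :=
        (abs_add_le _ _).trans (by rw [abs_mul]; gcongr; exact abs_sub _ _)
    _ ≤ |centeredPartialSum y E b| + |centeredPartialSum y E a| + 1 * |E| := by gcongr
    _ = _ := by rw [one_mul]

theorem tendstoUniformlyOn_windowedMoment_one {h : ℝ} (T : ℝ) (hh : 0 < h)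
    (hy : Tendsto (fun m : ℕ => (∑ i ∈ range m, y i) / m) atTop (nhds E)) :
    TendstoUniformlyOn (fun n t => windowedMoment n h t 1 y) (fun _ => E) atTop
      (Set.Icc h T) := by
  rcases lt_or_ge T h with hTh | hhT
  · rw [Set.Icc_eq_empty_of_lt hTh]
    exact tendstoUniformlyOn_empty
  have hT : 0 < T := hh.trans_le hhT
  rw [Metric.tendstoUniformlyOn_iff]
  intro δ hδ
  set ε := δ * h / (4 * T) with hε
  obtain ⟨C, hC⟩ := exists_abs_centeredPartialSum_le hy (ε := ε) (by positivity)
  have hsmall : ∀ᶠ n : ℕ in atTop, (2 * C + |E|) / n / h < δ / 2 := by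
    have := (tendsto_const_div_atTop_nhds_zero_nat (2 * C + |E|)).div_const h
    rw [zero_div] at this
    exact this.eventually (gt_mem_nhds (half_pos hδ))
  filter_upwards [hsmall, eventually_gt_atTop 0] with n hn hn0 t ⟨hht, htT⟩
  have hn' : (0 : ℝ) < n := by exact_mod_cast hn0
  have hb : (⌊(n : ℝ) * t⌋₊ : ℝ) ≤ n * T :=
    (Nat.floor_le (by nlinarith)).trans (by gcongr)
  have ha : (⌊(n : ℝ) * (t - h)⌋₊ : ℝ) ≤ n * T :=
    (Nat.floor_le (by nlinarith)).trans (by nlinarith)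
  rw [dist_comm, Real.dist_eq]
  refine (abs_windowedMoment_one_sub_le hn0 hh hht).trans_lt ?_
  have hε0 : 0 ≤ ε := by positivity
  calc _ ≤ (2 * C + |E| + ε * (2 * (n * T))) / (n * h) := by
        gcongr ?_ / _
        nlinarith [hC ⌊(n : ℝ) * t⌋₊, hC ⌊(n : ℝ) * (t - h)⌋₊, mul_le_mul_of_nonneg_left hb hε0,
          mul_le_mul_of_nonneg_left ha hε0]
    _ = (2 * C + |E|) / n / h + δ / 2 := by
        rw [hε]
        field_simp
        ring
    _ < δ := by linarith

end Deterministic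

theorem windowed_moments_uniform_slln_general
    {Ω : Type*} [MeasurableSpace Ω] (μ : Measure Ω) [IsProbabilityMeasure μ]
    (X : ℕ → Ω → ℝ)
    (hindep : iIndepFun X μ)
    (hident : ∀ i, IdentDistrib (X i) (X 0) μ μ)
    (hint4 : Integrable (fun ω => |X 0 ω| ^ 4) μ)
    (h T : ℝ) (hh : 0 < h) :
    ∀ k : ℕ, 1 ≤ k → k ≤ 4 →
      ∀ᵐ ω ∂μ,
        Tendsto
          (fun n : ℕ =>
            ⨆ t : Set.Icc h T,
              |windowedMoment n h (t : ℝ) k (fun i => X i ω)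
                - ∫ ω', (X 0 ω') ^ k ∂μ|)
          atTop (nhds 0) := by
  intro k _ hk4
  have hpow : Measurable fun x : ℝ => x ^ k := measurable_id.pow_const k
  have hslln := strong_law_ae_real (fun i ω => X i ω ^ k)
    (integrable_pow_of_integrable_abs_pow (hident 0).aemeasurable_fst.aestronglyMeasurable
      hint4 hk4)
    (fun i j hij => (hindep.indepFun hij).comp hpow hpow)
    (fun i => (hident i).comp hpow)
  filter_upwards [hslln] with ω hω
  simpa only [Real.dist_eq, windowedMoment_one_pow] using
    (tendstoUniformlyOn_windowedMoment_one T hh hω).tendsto_iSup_dist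

/-- For i.i.d. random variables with finite fourth moment, the windowed empirical
`k`-th moments (`k = 1,…,4`) converge almost surely to `E[X_1^k]`, uniformly
over `t ∈ [h, T]`. -/
theorem windowed_moments_uniform_slln
    {Ω : Type*} [MeasurableSpace Ω] (μ : Measure Ω) [IsProbabilityMeasure μ]
    (X : ℕ → Ω → ℝ)
    (hmeas : ∀ i, Measurable (X i))
    (hindep : iIndepFun X μ)
    (hident : ∀ i, IdentDistrib (X i) (X 0) μ μ)
    (hint4 : Integrable (fun ω => |X 0 ω| ^ 4) μ)
    (h T : ℝ) (hh : 0 < h) (hhT : h ≤ T - h) (hT : 0 < T) :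
    ∀ k : ℕ, 1 ≤ k → k ≤ 4 →
      ∀ᵐ ω ∂μ,
        Tendsto
          (fun n : ℕ =>
            ⨆ t : Set.Icc h T,
              |windowedMoment n h (t : ℝ) k (fun i => X i ω)
                - ∫ ω', (X 0 ω') ^ k ∂μ|)
          atTop (nhds 0) :=
  windowed_moments_uniform_slln_general μ X hindep hident hint4 h T hh
end

section
/- Let (X_i)_{i≥1} be i.i.d. real random variables with E[X_1^4] < ∞, mean μ, variance σ², and ν² = E[(X_1−μ)^4] − σ^4. Fix reals 0 < h ≤ T − h with T > 0. For n ≥ 1 and t ∈ [h,T] let I_n(t) = {⌊n(t−h)⌋+1, …, ⌊nt⌋}, μ̂_n(t) = (1/(nh)) ∑_{i∈I_n(t)} X_i, σ̂²_n(t) = (1/(nh)) ∑_{i∈I_n(t)} (X_i − μ̂_n(t))², and ν̂²_n(t) = (1/(nh)) ∑_{i∈I_n(t)} (X_i − μ̂_n(t))^4 − (σ̂²_n(t))². Then sup_{t ∈ [h,T]} | σ̂²_n(t) − σ² | → 0 and sup_{t ∈ [h,T]} | ν̂²_n(t) − ν² | → 0 almost surely as n → ∞. -/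
open MeasureTheory ProbabilityTheory Filter Finset

/-- Index set of the moving window `(t-h, t]` (0-indexed:
`⌊n(t-h)⌋ ≤ i < ⌊nt⌋`). -/
noncomputable def windowIdx (n : ℕ) (h t : ℝ) : Finset ℕ :=
  Finset.Ico ⌊(n : ℝ) * (t - h)⌋₊ ⌊(n : ℝ) * t⌋₊

/-- Windowed empirical mean `μ̂_n(t) = (1/(nh)) ∑_{i ∈ I_n(t)} X_i`. -/
noncomputable def wMean (n : ℕ) (h t : ℝ) (x : ℕ → ℝ) : ℝ :=
  (∑ i ∈ windowIdx n h t, x i) / ((n : ℝ) * h)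

/-- Windowed empirical variance
`σ̂²_n(t) = (1/(nh)) ∑_{i ∈ I_n(t)} (X_i - μ̂_n(t))²`. -/
noncomputable def wVar (n : ℕ) (h t : ℝ) (x : ℕ → ℝ) : ℝ :=
  (∑ i ∈ windowIdx n h t, (x i - wMean n h t x) ^ 2) / ((n : ℝ) * h)

/-- Windowed estimator
`ν̂²_n(t) = (1/(nh)) ∑_{i ∈ I_n(t)} (X_i - μ̂_n(t))⁴ - (σ̂²_n(t))²`. -/
noncomputable def wNu2 (n : ℕ) (h t : ℝ) (x : ℕ → ℝ) : ℝ :=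
  (∑ i ∈ windowIdx n h t, (x i - wMean n h t x) ^ 4) / ((n : ℝ) * h)
    - (wVar n h t x) ^ 2

/-! The strong law of large numbers, applied to `X i` and to `(X i - m) ^ j` for `j ≤ 4`, makes
the Cesàro means `S k / k` of these sequences converge almost surely. For a deterministic sequence
with `S k / k → L`, the rescaled partial sums `S ⌊n s⌋ / n` converge to `L s` uniformly in
`s ∈ [0, T]`; the window average is `(S ⌊n t⌋ - S ⌊n (t - h)⌋) / (n h)`, so it converges to `L`
uniformly in `t ∈ [h, T]`. Expanding `(X i - μ̂) ^ p = ((X i - m) - (μ̂ - m)) ^ p` binomially writes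
the centered window moments through window averages of `(X i - m) ^ j` and powers of
`μ̂ - m → 0`. Uniform convergence in `t` is encoded as convergence along `atTop ×ˢ 𝓟 (Icc h T)`,
where it is preserved by the arithmetic operations. -/

lemma exists_abs_le_mul_add_of_tendsto_div {u : ℕ → ℝ}
    (hu : Tendsto (fun k : ℕ => u k / k) atTop (nhds 0)) {δ : ℝ} (hδ : 0 < δ) :
    ∃ M, ∀ k : ℕ, |u k| ≤ δ * k + M := by
  obtain ⟨K, hK⟩ := eventually_atTop.1 ((Metric.tendsto_nhds.1 hu) δ hδ)
  refine ⟨∑ j ∈ range (K + 1), |u j|, fun k => ?_⟩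
  rcases lt_or_ge k (K + 1) with hk | hk
  · have hsmall := single_le_sum (fun j _ => abs_nonneg (u j)) (mem_range.2 hk)
    have hδk : 0 ≤ δ * k := by positivity
    linarith
  · have hk0 : (0 : ℝ) < k := by exact_mod_cast (show 0 < k by omega)
    have hdiv : |u k| / k < δ := by simpa [abs_div, abs_of_pos hk0] using hK k (by omega)
    have hlarge := (div_lt_iff₀ hk0).1 hdiv
    nlinarith [sum_nonneg fun j (_ : j ∈ range (K + 1)) => abs_nonneg (u j)]

lemma tendsto_comp_div_of_tendsto_div {ι : Type*} {l : Filter ι} {u : ℕ → ℝ}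
    (hu : Tendsto (fun k : ℕ => u k / k) atTop (nhds 0)) {k : ι → ℕ} {r : ι → ℝ} {C : ℝ}
    (hr : Tendsto r l atTop) (hk : ∀ᶠ i in l, (k i : ℝ) ≤ C * r i) :
    Tendsto (fun i => u (k i) / r i) l (nhds 0) := by
  rw [Metric.tendsto_nhds]
  intro ε hε
  obtain ⟨δ, hδ, hδC⟩ := exists_pos_mul_lt (half_pos hε) |C|
  obtain ⟨M, hM⟩ := exists_abs_le_mul_add_of_tendsto_div hu hδ
  have hMr := Metric.tendsto_nhds.1 (tendsto_const_nhds (x := M).div_atTop hr) (ε / 2)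
    (half_pos hε)
  filter_upwards [hk, hMr, hr.eventually_gt_atTop 0] with i hki hMi hri
  rw [Real.dist_eq, sub_zero, abs_div, abs_of_pos hri, div_lt_iff₀ hri] at hMi ⊢
  calc |u (k i)| ≤ δ * k i + M := hM (k i)
    _ ≤ δ * (|C| * r i) + |M| := by
      gcongr
      · exact hki.trans (by gcongr; exact le_abs_self C)
      · exact le_abs_self M
    _ < ε * r i := by nlinarith

lemma tendsto_sum_range_floor_div_sub_mul {a : ℕ → ℝ} {L : ℝ}
    (ha : Tendsto (fun k : ℕ => (∑ i ∈ range k, a i) / k) atTop (nhds L)) (T : ℝ) :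
    Tendsto (fun q : ℕ × ℝ => (∑ i ∈ range ⌊q.1 * q.2⌋₊, a i) / q.1 - L * q.2)
      (atTop ×ˢ 𝓟 (Set.Icc 0 T)) (nhds 0) := by
  have hu : Tendsto (fun k : ℕ => (∑ i ∈ range k, a i - k * L) / k) atTop (nhds 0) := by
    rw [← sub_self L]
    refine (ha.sub_const L).congr' ?_
    filter_upwards [eventually_ne_atTop 0] with k hk
    field_simp
  have hn : Tendsto (fun q : ℕ × ℝ => (q.1 : ℝ)) (atTop ×ˢ 𝓟 (Set.Icc 0 T)) atTop :=
    tendsto_natCast_atTop_atTop.comp tendsto_fst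
  have hmem : ∀ᶠ q : ℕ × ℝ in atTop ×ˢ 𝓟 (Set.Icc 0 T), q.2 ∈ Set.Icc 0 T :=
    eventually_prod_principal_iff.2 (Eventually.of_forall fun _ _ ht => ht)
  have hfloor : ∀ᶠ q : ℕ × ℝ in atTop ×ˢ 𝓟 (Set.Icc 0 T),
      (⌊q.1 * q.2⌋₊ : ℝ) ≤ q.1 * q.2 ∧ q.1 * q.2 < ⌊q.1 * q.2⌋₊ + 1 :=
    hmem.mono fun q hq => ⟨Nat.floor_le (by have := hq.1; positivity), Nat.lt_floor_add_one _⟩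
  have hpartial : Tendsto (fun q : ℕ × ℝ =>
      (∑ i ∈ range ⌊q.1 * q.2⌋₊, a i - ⌊q.1 * q.2⌋₊ * L) / q.1)
      (atTop ×ˢ 𝓟 (Set.Icc 0 T)) (nhds 0) := by
    refine tendsto_comp_div_of_tendsto_div (u := fun k => ∑ i ∈ range k, a i - k * L) hu hn
      (C := T) ?_
    filter_upwards [hmem, hfloor] with q hq hfl
    nlinarith [hq.2, hfl.1, (Nat.cast_nonneg q.1 : (0 : ℝ) ≤ q.1)]
  have hrounding : Tendsto (fun q : ℕ × ℝ => (⌊q.1 * q.2⌋₊ - q.1 * q.2) / q.1)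
      (atTop ×ˢ 𝓟 (Set.Icc 0 T)) (nhds 0) := by
    refine squeeze_zero_norm' ?_ (tendsto_const_nhds (x := (1 : ℝ)).div_atTop hn)
    filter_upwards [hfloor] with q hfl
    rw [norm_div, Real.norm_eq_abs, Real.norm_natCast]
    gcongr
    rw [abs_le]
    constructor <;> linarith [hfl.1, hfl.2]
  have := hpartial.add (hrounding.const_mul L)
  rw [mul_zero, add_zero] at this
  refine this.congr' ?_
  filter_upwards [hn.eventually_gt_atTop 0] with q hq
  field_simp
  ring

lemma tendsto_wMean_of_tendsto_cesaro {a : ℕ → ℝ} {L h : ℝ} (hh : 0 < h)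
    (ha : Tendsto (fun k : ℕ => (∑ i ∈ range k, a i) / k) atTop (nhds L)) (T : ℝ) :
    Tendsto (fun q : ℕ × ℝ => wMean q.1 h q.2 a) (atTop ×ˢ 𝓟 (Set.Icc h T)) (nhds L) := by
  set F := fun q : ℕ × ℝ => (∑ i ∈ range ⌊q.1 * q.2⌋₊, a i) / q.1 - L * q.2
  have hF : Tendsto F (atTop ×ˢ 𝓟 (Set.Icc 0 T)) (nhds 0) :=
    tendsto_sum_range_floor_div_sub_mul ha T
  have hright : Tendsto F (atTop ×ˢ 𝓟 (Set.Icc h T)) (nhds 0) :=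
    hF.mono_left (prod_mono le_rfl (principal_mono.2 (Set.Icc_subset_Icc_left hh.le)))
  have hleft : Tendsto (fun q : ℕ × ℝ => F (q.1, q.2 - h)) (atTop ×ˢ 𝓟 (Set.Icc h T))
      (nhds 0) :=
    hF.comp (tendsto_id.prodMap ((tendsto_principal_principal (f := fun t : ℝ => t - h)
      (s := Set.Icc h T) (t := Set.Icc 0 T)).2
        fun t ht => ⟨by linarith [ht.1], by linarith [ht.2]⟩))
  have := ((hright.sub hleft).div_const h).add_const L
  rw [sub_zero, zero_div, zero_add] at this
  refine this.congr' (eventually_prod_principal_iff.2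
    ((eventually_ne_atTop 0).mono fun n hn t ht => ?_))
  have hAB : ⌊(n : ℝ) * (t - h)⌋₊ ≤ ⌊(n : ℝ) * t⌋₊ :=
    Nat.floor_le_floor (by gcongr; linarith [ht.1])
  simp only [F, wMean, windowIdx, sum_Ico_eq_sub _ hAB]
  field_simp
  ring

lemma tendsto_iSup_abs_sub_of_tendsto_prod {α : Type*} {s : Set α} {F : ℕ → α → ℝ} {L : ℝ}
    (hF : Tendsto (fun q : ℕ × α => F q.1 q.2) (atTop ×ˢ 𝓟 s) (nhds L)) :
    Tendsto (fun n => ⨆ t : s, |F n t - L|) atTop (nhds 0) := by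
  rw [Metric.tendsto_nhds]
  intro ε hε
  filter_upwards [eventually_prod_principal_iff.1 ((Metric.tendsto_nhds.1 hF) (ε / 2)
    (by positivity))] with n hn
  have hsup : ⨆ t : s, |F n t - L| ≤ ε / 2 :=
    Real.iSup_le (fun t => by simpa [Real.dist_eq] using (hn t t.2).le) (by positivity)
  rw [Real.dist_eq, sub_zero, abs_of_nonneg (Real.iSup_nonneg fun _ => abs_nonneg _)]
  linarith

lemma sum_sub_pow_div {κ : Type*} (s : Finset κ) (x : κ → ℝ) (c d : ℝ) (p : ℕ) :
    (∑ i ∈ s, (x i - c) ^ p) / d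
      = ∑ j ∈ range (p + 1), (∑ i ∈ s, x i ^ j) / d * (-c) ^ (p - j) * p.choose j := by
  simp_rw [sub_eq_add_neg (x _), add_pow, sum_div, sum_mul]
  rw [sum_comm]
  refine sum_congr rfl fun j _ => sum_congr rfl fun i _ => ?_
  ring

lemma tendsto_sum_binomial_of_tendsto_zero {ι : Type*} {l : Filter ι} {M : ι → ℕ → ℝ}
    {E : ℕ → ℝ} {c : ι → ℝ} {p : ℕ} (hM : ∀ j ≤ p, Tendsto (fun i => M i j) l (nhds (E j)))
    (hc : Tendsto c l (nhds 0)) :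
    Tendsto (fun i => ∑ j ∈ range (p + 1), M i j * (-c i) ^ (p - j) * p.choose j) l
      (nhds (E p)) := by
  have := tendsto_finsetSum (range (p + 1)) fun j hj =>
    ((hM j (Nat.lt_succ_iff.1 (mem_range.1 hj))).mul (hc.neg.pow (p - j))).mul_const
      (p.choose j : ℝ)
  convert this using 1
  rw [sum_range_succ, sum_eq_zero fun j hj => ?_]
  · simp
  · simp [(Nat.sub_pos_of_lt (mem_range.1 hj)).ne']

lemma tendsto_wMean_sub_wMean_pow {l : Filter (ℕ × ℝ)} {h m : ℝ} {x : ℕ → ℝ} {E : ℕ → ℝ}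
    {p : ℕ} (hmean : Tendsto (fun q : ℕ × ℝ => wMean q.1 h q.2 x) l (nhds m))
    (hmom : ∀ j ≤ p, Tendsto (fun q : ℕ × ℝ => wMean q.1 h q.2 fun i => (x i - m) ^ j) l
      (nhds (E j))) :
    Tendsto (fun q : ℕ × ℝ => wMean q.1 h q.2 fun i => (x i - wMean q.1 h q.2 x) ^ p) l
      (nhds (E p)) := by
  have hc : Tendsto (fun q : ℕ × ℝ => wMean q.1 h q.2 x - m) l (nhds 0) := by
    simpa using hmean.sub_const m
  refine (tendsto_sum_binomial_of_tendsto_zero hmom hc).congr fun q => ?_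
  simp only [wMean]
  rw [← sum_sub_pow_div]
  simp_rw [sub_sub_sub_cancel_right]

section Moments

variable {Ω : Type*} [MeasurableSpace Ω] {μ : Measure Ω}

lemma memLp_of_integrable_pow {f : Ω → ℝ} {p : ℕ} (hf : AEStronglyMeasurable f μ)
    (hp : Even p) (hint : Integrable (fun ω => f ω ^ p) μ) : MemLp f p μ := by
  rcases eq_or_ne p 0 with rfl | hp0
  · simpa using hf
  rw [← integrable_norm_rpow_iff hf (by exact_mod_cast hp0) (by simp)]
  simpa [Real.norm_eq_abs, hp.pow_abs] using hint

lemma MeasureTheory.MemLp.integrable_pow_of_le [IsFiniteMeasure μ] {f : Ω → ℝ} {p j : ℕ}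
    (hf : MemLp f p μ) (hj : j ≤ p) : Integrable (fun ω => f ω ^ j) μ := by
  refine (integrable_norm_iff (hf.1.pow j)).1 ?_
  simpa [norm_pow] using (hf.mono_exponent (by exact_mod_cast hj)).integrable_norm_pow'

lemma ae_tendsto_wMean_comp {X : ℕ → Ω → ℝ} (hindep : iIndepFun X μ)
    (hident : ∀ i, IdentDistrib (X i) (X 0) μ μ) {f : ℝ → ℝ} (hf : Measurable f)
    (hint : Integrable (fun ω => f (X 0 ω)) μ) {h : ℝ} (hh : 0 < h) (T : ℝ) :
    ∀ᵐ ω ∂μ, Tendsto (fun q : ℕ × ℝ => wMean q.1 h q.2 fun i => f (X i ω))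
      (atTop ×ˢ 𝓟 (Set.Icc h T)) (nhds (∫ ω, f (X 0 ω) ∂μ)) :=
  (strong_law_ae_real (fun i ω => f (X i ω)) hint
    (fun _ _ hij => (hindep.indepFun hij).comp hf hf) fun i => (hident i).comp hf).mono
    fun _ hω => tendsto_wMean_of_tendsto_cesaro hh hω T

end Moments

theorem windowed_var_nu2_uniform_slln_general
    {Ω : Type*} [MeasurableSpace Ω] (μ : Measure Ω) [IsProbabilityMeasure μ]
    (X : ℕ → Ω → ℝ)
    (hindep : iIndepFun X μ)
    (hident : ∀ i, IdentDistrib (X i) (X 0) μ μ)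
    (hint4 : Integrable (fun ω => (X 0 ω) ^ 4) μ)
    (h T : ℝ) (hh : 0 < h)
    (m σ2 ν2 : ℝ)
    (hm : m = ∫ ω, X 0 ω ∂μ)
    (hσ2 : σ2 = ∫ ω, (X 0 ω - m) ^ 2 ∂μ)
    (hν2 : ν2 = (∫ ω, (X 0 ω - m) ^ 4 ∂μ) - σ2 ^ 2) :
    (∀ᵐ ω ∂μ,
      Tendsto
        (fun n : ℕ =>
          ⨆ t : Set.Icc h T, |wVar n h (t : ℝ) (fun i => X i ω) - σ2|)
        atTop (nhds 0)) ∧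
    (∀ᵐ ω ∂μ,
      Tendsto
        (fun n : ℕ =>
          ⨆ t : Set.Icc h T, |wNu2 n h (t : ℝ) (fun i => X i ω) - ν2|)
        atTop (nhds 0)) := by
  have hX : MemLp (X 0) (4 : ℕ) μ :=
    memLp_of_integrable_pow (hident 0).aemeasurable_fst.aestronglyMeasurable (by decide) hint4
  have hY : MemLp (fun ω => X 0 ω - m) (4 : ℕ) μ := hX.sub (memLp_const m)
  have hmean := ae_tendsto_wMean_comp hindep hident measurable_id
    (hX.integrable (by norm_num)) hh T
  have hmom : ∀ᵐ ω ∂μ, ∀ j ∈ range 5, Tendsto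
      (fun q : ℕ × ℝ => wMean q.1 h q.2 fun i => (X i ω - m) ^ j) (atTop ×ˢ 𝓟 (Set.Icc h T))
      (nhds (∫ ω, (X 0 ω - m) ^ j ∂μ)) :=
    (eventually_all_finset _).2 fun j hj => ae_tendsto_wMean_comp hindep hident
      (measurable_id.sub_const m |>.pow_const j)
      (hY.integrable_pow_of_le (Nat.lt_succ_iff.1 (mem_range.1 hj))) hh T
  refine eventually_and.1 ?_
  filter_upwards [hmean, hmom] with ω hmean hmom
  have hcentered : ∀ p ≤ 4, Tendsto (fun q : ℕ × ℝ =>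
      wMean q.1 h q.2 fun i => (X i ω - wMean q.1 h q.2 fun i => X i ω) ^ p)
      (atTop ×ˢ 𝓟 (Set.Icc h T)) (nhds (∫ ω, (X 0 ω - m) ^ p ∂μ)) := fun p hp =>
    tendsto_wMean_sub_wMean_pow (hm ▸ hmean) fun j hj => hmom j (mem_range.2 (by omega))
  have hvar : Tendsto (fun q : ℕ × ℝ => wVar q.1 h q.2 fun i => X i ω)
      (atTop ×ˢ 𝓟 (Set.Icc h T)) (nhds σ2) := hσ2 ▸ hcentered 2 (by norm_num)
  have hnu : Tendsto (fun q : ℕ × ℝ => wNu2 q.1 h q.2 fun i => X i ω)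
      (atTop ×ˢ 𝓟 (Set.Icc h T)) (nhds ν2) := hν2 ▸ (hcentered 4 le_rfl).sub (hvar.pow 2)
  exact ⟨tendsto_iSup_abs_sub_of_tendsto_prod (F := fun n t => wVar n h t fun i => X i ω) hvar,
    tendsto_iSup_abs_sub_of_tendsto_prod (F := fun n t => wNu2 n h t fun i => X i ω) hnu⟩

/-- For i.i.d. random variables with finite fourth moment, the windowed empirical
variance and the windowed estimator `ν̂²` converge almost surely to `σ²` and
`ν² = E[(X-μ)⁴] - σ⁴`, uniformly over `t ∈ [h, T]`. -/
theorem windowed_var_nu2_uniform_slln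
    {Ω : Type*} [MeasurableSpace Ω] (μ : Measure Ω) [IsProbabilityMeasure μ]
    (X : ℕ → Ω → ℝ)
    (hmeas : ∀ i, Measurable (X i))
    (hindep : iIndepFun X μ)
    (hident : ∀ i, IdentDistrib (X i) (X 0) μ μ)
    (hint4 : Integrable (fun ω => (X 0 ω) ^ 4) μ)
    (h T : ℝ) (hh : 0 < h) (hhT : h ≤ T - h) (hT : 0 < T)
    (m σ2 ν2 : ℝ)
    (hm : m = ∫ ω, X 0 ω ∂μ)
    (hσ2 : σ2 = ∫ ω, (X 0 ω - m) ^ 2 ∂μ)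
    (hν2 : ν2 = (∫ ω, (X 0 ω - m) ^ 4 ∂μ) - σ2 ^ 2) :
    (∀ᵐ ω ∂μ,
      Tendsto
        (fun n : ℕ =>
          ⨆ t : Set.Icc h T, |wVar n h (t : ℝ) (fun i => X i ω) - σ2|)
        atTop (nhds 0)) ∧
    (∀ᵐ ω ∂μ,
      Tendsto
        (fun n : ℕ =>
          ⨆ t : Set.Icc h T, |wNu2 n h (t : ℝ) (fun i => X i ω) - ν2|)
        atTop (nhds 0)) :=
  windowed_var_nu2_uniform_slln_general μ X hindep hident hint4 h T hh m σ2 ν2 hm hσ2 hν2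
end

section
/- Let (X_i)_{i≥1} be i.i.d. real random variables with E[X_1^4] < ∞, σ² = Var(X_1) > 0, ν² = Var((X_1−μ)²) > 0 where μ = E[X_1], and ρ = E[(X_1−μ)³]/(σν). Fix reals 0 < h and T ≥ 2h. For n ≥ 1 and t ∈ [h, T−h] let I_ℓ = {⌊n(t−h)⌋+1,…,⌊nt⌋} and I_r = {⌊nt⌋+1,…,⌊n(t+h)⌋}, and for j ∈ {ℓ,r} define μ̂_j = (1/(nh))∑_{i∈I_j} X_i, σ̂²_j = (1/(nh))∑_{i∈I_j}(X_i−μ̂_j)², μ̂^{{3}}_j = (1/(nh))∑_{i∈I_j}(X_i−μ̂_j)³, and ν̂²_j = (1/(nh))∑_{i∈I_j}(X_i−μ̂_j)^4 − (σ̂²_j)². Define ρ̂_n(t) = (μ̂^{{3}}_r + μ̂^{{3}}_ℓ)/((σ̂²_r + σ̂²_ℓ)^{1/2}·(ν̂²_r + ν̂²_ℓ)^{1/2}). Then sup_{t ∈ [h,T−h]} | ρ̂_n(t) − ρ | → 0 almost surely as n → ∞. -/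
open MeasureTheory ProbabilityTheory Filter Finset

/-- Index set corresponding to the time window `(a, b]` (0-indexed:
`⌊na⌋ ≤ i < ⌊nb⌋`). -/
noncomputable def winIdx (n : ℕ) (a b : ℝ) : Finset ℕ :=
  Finset.Ico ⌊(n : ℝ) * a⌋₊ ⌊(n : ℝ) * b⌋₊

/-- Empirical mean over the window `(a, b]`, normalized by `nh`. -/
noncomputable def winMean (n : ℕ) (h a b : ℝ) (x : ℕ → ℝ) : ℝ :=
  (∑ i ∈ winIdx n a b, x i) / ((n : ℝ) * h)

/-- Empirical `k`-th central moment over the window `(a, b]`, normalized by `nh`. -/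
noncomputable def winCM (n : ℕ) (h a b : ℝ) (k : ℕ) (x : ℕ → ℝ) : ℝ :=
  (∑ i ∈ winIdx n a b, (x i - winMean n h a b x) ^ k) / ((n : ℝ) * h)

/-- Empirical `ν̂²` over the window `(a, b]`. -/
noncomputable def winNu2 (n : ℕ) (h a b : ℝ) (x : ℕ → ℝ) : ℝ :=
  winCM n h a b 4 x - (winCM n h a b 2 x) ^ 2

/-- The local correlation estimator
`ρ̂_n(t) = (μ̂³_r + μ̂³_ℓ) / (√(σ̂²_r + σ̂²_ℓ) · √(ν̂²_r + ν̂²_ℓ))`, where the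
left window is `(t-h, t]` and the right window is `(t, t+h]`. -/
noncomputable def rhoHat (n : ℕ) (h t : ℝ) (x : ℕ → ℝ) : ℝ :=
  (winCM n h t (t + h) 3 x + winCM n h (t - h) t 3 x) /
    (Real.sqrt (winCM n h t (t + h) 2 x + winCM n h (t - h) t 2 x) *
      Real.sqrt (winNu2 n h t (t + h) x + winNu2 n h (t - h) t x))

/-!
Fix `ω` outside the null set on which the strong law fails for one of `(X i - m) ^ j`, `j ≤ 4`.
If `S k / k → L`, then `S ⌊n a⌋ / n → L a` uniformly for `a` in a compact interval, so every
window average over `(u - h, u]`, normalised by `n h`, converges to `L` uniformly in `u`.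
Expanding `(x i - μ̂)^k = ((x i - m) + (m - μ̂))^k` writes each empirical central moment as a
polynomial in window moments about the true mean `m` and in `m - μ̂`; hence `σ̂²`, `μ̂³`, `ν̂²` on
both windows converge uniformly to `σ²`, `μ³`, `ν²`, and `ρ̂_n(t)`, continuous at that limit,
converges uniformly to `2μ³ / (√(2σ²) √(2ν²)) = ρ`.

Uniform convergence in `t` is phrased as convergence along the filter `atTop ×ˢ 𝓟 s`, so that
sums, products, quotients and square roots of uniformly convergent estimators are handled by the
ordinary `Tendsto` API.
-/

open Topology

lemma exists_abs_le_mul_add_of_tendsto_div_s3 {e : ℕ → ℝ}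
    (he : Tendsto (fun k : ℕ => e k / k) atTop (𝓝 0)) {ε : ℝ} (hε : 0 < ε) :
    ∃ C, ∀ k : ℕ, |e k| ≤ ε * k + C := by
  obtain ⟨K, hK⟩ := eventually_atTop.1
    ((he.eventually (Metric.ball_mem_nhds 0 hε)).and (eventually_gt_atTop 0))
  have hC : 0 ≤ ∑ k ∈ range K, |e k| := sum_nonneg fun _ _ => abs_nonneg _
  refine ⟨∑ k ∈ range K, |e k|, fun k => ?_⟩
  rcases lt_or_ge k K with hk | hk
  · have := single_le_sum (f := fun k => |e k|) (fun _ _ => abs_nonneg _) (mem_range.2 hk)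
    have : 0 ≤ ε * k := by positivity
    linarith
  · obtain ⟨hsmall, hpos⟩ := hK k hk
    rw [dist_zero_right, norm_div, Real.norm_eq_abs, RCLike.norm_natCast,
      div_lt_iff₀ (by exact_mod_cast hpos)] at hsmall
    linarith

-- `S k - L k = o(k)` and `k ≤ n T`, so the error is `o(n)` uniformly in `a`.
theorem tendsto_floor_mul_div_sub {S : ℕ → ℝ} {L : ℝ}
    (hS : Tendsto (fun k : ℕ => S k / k) atTop (𝓝 L)) (T : ℝ) :
    Tendsto (fun p : ℕ × ℝ => S ⌊p.1 * p.2⌋₊ / p.1 - L * p.2)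
      (atTop ×ˢ 𝓟 (Set.Icc 0 T)) (𝓝 0) := by
  have he : Tendsto (fun k : ℕ => (S k - L * k) / k) atTop (𝓝 0) := by
    refine (sub_self L ▸ hS.sub_const L).congr' ?_
    filter_upwards [eventually_ne_atTop 0] with k hk
    field_simp
  rw [Metric.tendsto_nhds]
  intro ε hε
  set ε' := ε / (2 * (|T| + 1))
  obtain ⟨C, hC⟩ := exists_abs_le_mul_add_of_tendsto_div_s3 he (by positivity : 0 < ε')
  have hinv : Tendsto (fun n : ℕ => (C + |L|) / n) atTop (𝓝 0) :=
    tendsto_const_div_atTop_nhds_zero_nat _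
  rw [eventually_prod_principal_iff]
  filter_upwards [hinv.eventually (gt_mem_nhds (half_pos hε)), eventually_gt_atTop 0]
    with n hsmall hn a ⟨ha0, haT⟩
  set k := ⌊(n : ℝ) * a⌋₊
  have hn' : (0 : ℝ) < n := by exact_mod_cast hn
  have hk : (k : ℝ) ≤ n * a := Nat.floor_le (by positivity)
  have hk' : (n : ℝ) * a < k + 1 := Nat.lt_floor_add_one _
  have hε' : ε' * |T| < ε / 2 := by
    rw [div_mul_eq_mul_div, div_lt_div_iff₀ (by positivity) two_pos]
    nlinarith [abs_nonneg T]
  have hLk : |L * (k - n * a)| ≤ |L| := by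
    rw [abs_mul]
    exact mul_le_of_le_one_right (abs_nonneg L) (abs_le.2 ⟨by linarith, by linarith⟩)
  rw [dist_zero_right, Real.norm_eq_abs]
  calc |S k / n - L * a| = |(S k - L * k) + L * (k - n * a)| / n := by
        rw [← abs_of_pos hn', ← abs_div, abs_of_pos hn']
        congr 1
        field_simp
        ring
    _ ≤ (ε' * k + C + |L|) / n := by
        gcongr
        exact (abs_add_le _ _).trans (add_le_add (hC k) hLk)
    _ ≤ ε' * a + (C + |L|) / n := by
        rw [add_assoc, add_div, mul_div_assoc]
        gcongr
        rwa [div_le_iff₀ hn', mul_comm]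
    _ ≤ ε' * |T| + (C + |L|) / n := by
        gcongr
        exact haT.trans (le_abs_self T)
    _ < ε := by linarith

theorem tendsto_sum_winIdx_div {y : ℕ → ℝ} {L h : ℝ}
    (hy : Tendsto (fun k : ℕ => (∑ i ∈ range k, y i) / k) atTop (𝓝 L)) (hh : 0 < h) (T : ℝ) :
    Tendsto (fun p : ℕ × ℝ => (∑ i ∈ winIdx p.1 (p.2 - h) p.2, y i) / (p.1 * h))
      (atTop ×ˢ 𝓟 (Set.Icc h T)) (𝓝 L) := by
  have hU := tendsto_floor_mul_div_sub hy T
  have hright :=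
    hU.mono_left (prod_mono le_rfl (principal_mono.2 (Set.Icc_subset_Icc_left hh.le)))
  have hleft := hU.comp (tendsto_id.prodMap (g := fun u => u - h)
    (tendsto_principal_principal.2 fun u (hu : u ∈ Set.Icc h T) =>
      ⟨sub_nonneg.2 hu.1, by linarith [hu.2]⟩))
  have hlim := ((hright.sub hleft).div_const h).const_add L
  rw [sub_zero, zero_div, add_zero] at hlim
  refine hlim.congr' (eventually_prod_principal_iff.2 ?_)
  filter_upwards [eventually_gt_atTop 0] with n hn u hu
  have hfloor : ⌊(n : ℝ) * (u - h)⌋₊ ≤ ⌊(n : ℝ) * u⌋₊ := Nat.floor_le_floor (by nlinarith)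
  have hn' : (n : ℝ) ≠ 0 := by positivity
  simp only [Function.comp, Prod.map, id, winIdx, sum_Ico_eq_sub _ hfloor]
  field_simp
  ring

noncomputable def winMomentAbout (n : ℕ) (h a b m : ℝ) (j : ℕ) (x : ℕ → ℝ) : ℝ :=
  (∑ i ∈ winIdx n a b, (x i - m) ^ j) / ((n : ℝ) * h)

section WindowMoments

variable (n : ℕ) (h a b m : ℝ) (x : ℕ → ℝ)

lemma winMean_eq_winMomentAbout :
    winMean n h a b x = winMomentAbout n h a b m 1 x + m * winMomentAbout n h a b m 0 x := by
  simp only [winMean, winMomentAbout, pow_one, pow_zero, sum_sub_distrib, sum_const, nsmul_eq_mul,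
    mul_one]
  ring

lemma winCM_eq_sum_winMomentAbout (k : ℕ) :
    winCM n h a b k x = ∑ j ∈ range (k + 1),
      winMomentAbout n h a b m j x * (m - winMean n h a b x) ^ (k - j) * k.choose j := by
  have hsplit : ∀ i, x i - winMean n h a b x = (x i - m) + (m - winMean n h a b x) := fun i => by
    ring
  simp only [winCM, winMomentAbout, hsplit, add_pow, sum_div]
  rw [sum_comm]
  refine sum_congr rfl fun j _ => ?_
  simp only [sum_mul]
  exact sum_congr rfl fun i _ => by ring

end WindowMoments

theorem tendsto_winCM {x : ℕ → ℝ} {m h : ℝ} {M : ℕ → ℝ} (hh : 0 < h) (T : ℝ) {k : ℕ}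
    (hk : 1 ≤ k)
    (hx : ∀ j ≤ k, Tendsto (fun N : ℕ => (∑ i ∈ range N, (x i - m) ^ j) / N) atTop (𝓝 (M j)))
    (hM0 : M 0 = 1) (hM1 : M 1 = 0) :
    Tendsto (fun p : ℕ × ℝ => winCM p.1 h (p.2 - h) p.2 k x)
      (atTop ×ˢ 𝓟 (Set.Icc h T)) (𝓝 (M k)) := by
  have hmoment : ∀ j ≤ k, Tendsto (fun p : ℕ × ℝ => winMomentAbout p.1 h (p.2 - h) p.2 m j x)
      (atTop ×ˢ 𝓟 (Set.Icc h T)) (𝓝 (M j)) :=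
    fun j hj => tendsto_sum_winIdx_div (hx j hj) hh T
  have hmean : Tendsto (fun p : ℕ × ℝ => winMean p.1 h (p.2 - h) p.2 x)
      (atTop ×ˢ 𝓟 (Set.Icc h T)) (𝓝 m) := by
    have := (hmoment 1 hk).add ((hmoment 0 k.zero_le).const_mul m)
    rw [hM0, hM1, zero_add, mul_one] at this
    simpa only [← winMean_eq_winMomentAbout] using this
  have hMk : M k = ∑ j ∈ range (k + 1), M j * (m - m) ^ (k - j) * k.choose j := by
    rw [sum_eq_single_of_mem k (self_mem_range_succ k) fun j hj hjk => ?_]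
    · simp
    · have : 0 < k - j := Nat.sub_pos_of_lt (lt_of_le_of_ne (mem_range_succ_iff.1 hj) hjk)
      simp [zero_pow this.ne']
  simp only [winCM_eq_sum_winMomentAbout _ _ _ _ m]
  rw [hMk]
  exact tendsto_finsetSum _ fun j hj =>
    ((hmoment j (mem_range_succ_iff.1 hj)).mul ((hmean.const_sub m).pow _)).mul_const _

lemma add_self_div_sqrt_add_self_mul_sqrt_add_self (a b c : ℝ) :
    (c + c) / (√(a + a) * √(b + b)) = c / (√a * √b) := by
  have h2 : √2 * √2 = 2 := Real.mul_self_sqrt zero_le_two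
  rw [← two_mul, ← two_mul, ← two_mul, Real.sqrt_mul zero_le_two, Real.sqrt_mul zero_le_two,
    mul_mul_mul_comm, h2, mul_div_mul_left _ _ two_ne_zero]

theorem tendsto_rhoHat {x : ℕ → ℝ} {m h : ℝ} {M : ℕ → ℝ} (hh : 0 < h) (T : ℝ)
    (hx : ∀ j ≤ 4, Tendsto (fun N : ℕ => (∑ i ∈ range N, (x i - m) ^ j) / N) atTop (𝓝 (M j)))
    (hM0 : M 0 = 1) (hM1 : M 1 = 0) (hM2 : 0 < M 2) (hν : 0 < M 4 - M 2 ^ 2) :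
    Tendsto (fun p : ℕ × ℝ => rhoHat p.1 h p.2 x) (atTop ×ˢ 𝓟 (Set.Icc h (T - h)))
      (𝓝 (M 3 / (√(M 2) * √(M 4 - M 2 ^ 2)))) := by
  have hwindows : ∀ k, 1 ≤ k → k ≤ 4 →
      Tendsto (fun p : ℕ × ℝ => winCM p.1 h (p.2 - h) p.2 k x)
        (atTop ×ˢ 𝓟 (Set.Icc h (T - h))) (𝓝 (M k)) ∧
      Tendsto (fun p : ℕ × ℝ => winCM p.1 h p.2 (p.2 + h) k x)
        (atTop ×ˢ 𝓟 (Set.Icc h (T - h))) (𝓝 (M k)) := fun k hk hk4 => by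
    have hwin := tendsto_winCM hh T hk (fun j hj => hx j (hj.trans hk4)) hM0 hM1
    refine ⟨hwin.mono_left
      (prod_mono le_rfl (principal_mono.2 (Set.Icc_subset_Icc_right (by linarith)))), ?_⟩
    have := hwin.comp (tendsto_id.prodMap (g := fun t => t + h)
      (tendsto_principal_principal.2 fun t (ht : t ∈ Set.Icc h (T - h)) =>
        ⟨by linarith [ht.1], by linarith [ht.2]⟩))
    simpa only [Function.comp_def, Prod.map_fst, Prod.map_snd, id, add_sub_cancel_right]
      using this
  obtain ⟨hL2, hR2⟩ := hwindows 2 (by norm_num) (by norm_num)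
  obtain ⟨hL3, hR3⟩ := hwindows 3 (by norm_num) (by norm_num)
  obtain ⟨hL4, hR4⟩ := hwindows 4 (by norm_num) (by norm_num)
  have hden : √(M 2 + M 2) * √((M 4 - M 2 ^ 2) + (M 4 - M 2 ^ 2)) ≠ 0 := by positivity
  have hlim := (hR3.add hL3).div
    ((hR2.add hL2).sqrt.mul (((hR4.sub (hR2.pow 2)).add (hL4.sub (hL2.pow 2))).sqrt)) hden
  rwa [add_self_div_sqrt_add_self_mul_sqrt_add_self] at hlim

theorem tendsto_iSup_abs_sub_of_tendsto_prod_s3 {ι α : Type*} {l : Filter ι} {f : ι → α → ℝ}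
    {s : Set α} {c : ℝ} (hf : Tendsto (fun p : ι × α => f p.1 p.2) (l ×ˢ 𝓟 s) (𝓝 c)) :
    Tendsto (fun i => ⨆ t : s, |f i t - c|) l (𝓝 0) := by
  rw [Metric.tendsto_nhds] at hf ⊢
  intro ε hε
  filter_upwards [eventually_prod_principal_iff.1 (hf (ε / 2) (half_pos hε))] with i hi
  have hsup : ⨆ t : s, |f i t - c| ≤ ε / 2 :=
    Real.iSup_le (fun t => (hi t t.2).le) (half_pos hε).le
  rw [dist_zero_right, Real.norm_of_nonneg (Real.iSup_nonneg fun _ => abs_nonneg _)]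
  linarith

theorem MeasureTheory.MemLp.integrable_sub_const_pow {Ω : Type*} [MeasurableSpace Ω]
    {μ : Measure Ω} [IsFiniteMeasure μ] {Y : Ω → ℝ} {p : ℕ} (hY : MemLp Y p μ) (m : ℝ) {j : ℕ}
    (hj : j ≤ p) :
    Integrable (fun ω => (Y ω - m) ^ j) μ := by
  have hYm : MemLp (fun ω => Y ω - m) p μ := hY.sub (memLp_const m)
  have hnorm := integrable_norm_pow_of_le hYm.1 hj hYm.integrable_norm_pow'
  simp only [← norm_pow] at hnorm
  exact (integrable_norm_iff (hYm.1.pow j)).1 hnorm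

theorem ProbabilityTheory.strong_law_ae_comp {Ω : Type*} [MeasurableSpace Ω] {μ : Measure Ω}
    {X : ℕ → Ω → ℝ} (hindep : iIndepFun X μ) (hident : ∀ i, IdentDistrib (X i) (X 0) μ μ)
    {φ : ℝ → ℝ} (hφ : Measurable φ) (hint : Integrable (fun ω => φ (X 0 ω)) μ) :
    ∀ᵐ ω ∂μ, Tendsto (fun N : ℕ => (∑ i ∈ range N, φ (X i ω)) / N) atTop
      (𝓝 (∫ ω, φ (X 0 ω) ∂μ)) := by
  filter_upwards [strong_law_ae (fun i ω => φ (X i ω)) hint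
    (fun i j hij => (hindep.indepFun hij).comp hφ hφ) (fun i => (hident i).comp hφ)] with ω hω
  simpa only [smul_eq_mul, inv_mul_eq_div] using hω

theorem rhoHat_uniform_slln_general
    {Ω : Type*} [MeasurableSpace Ω] (μ : Measure Ω) [IsProbabilityMeasure μ]
    (X : ℕ → Ω → ℝ)
    (hindep : iIndepFun X μ)
    (hident : ∀ i, IdentDistrib (X i) (X 0) μ μ)
    (hint4 : Integrable (fun ω => (X 0 ω) ^ 4) μ)
    (h T : ℝ) (hh : 0 < h)
    (m σ2 m3 ν2 ρ : ℝ)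
    (hm : m = ∫ ω, X 0 ω ∂μ)
    (hσ2 : σ2 = ∫ ω, (X 0 ω - m) ^ 2 ∂μ)
    (hm3 : m3 = ∫ ω, (X 0 ω - m) ^ 3 ∂μ)
    (hν2 : ν2 = (∫ ω, (X 0 ω - m) ^ 4 ∂μ) - σ2 ^ 2)
    (hσ2pos : 0 < σ2) (hν2pos : 0 < ν2)
    (hρ : ρ = m3 / (Real.sqrt σ2 * Real.sqrt ν2)) :
    ∀ᵐ ω ∂μ,
      Tendsto
        (fun n : ℕ =>
          ⨆ t : Set.Icc h (T - h), |rhoHat n h (t : ℝ) (fun i => X i ω) - ρ|)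
        atTop (nhds 0) := by
  set M : ℕ → ℝ := fun j => ∫ ω, (X 0 ω - m) ^ j ∂μ with hM
  have hX4 : MemLp (X 0) (4 : ℕ) μ := by
    rw [← integrable_norm_rpow_iff (hident 0).aemeasurable_snd.aestronglyMeasurable
      (by norm_num) (by norm_num)]
    simpa [Even.pow_abs ⟨2, rfl⟩] using hint4
  have hslln : ∀ᵐ ω ∂μ, ∀ j ∈ {j : ℕ | j ≤ 4}, Tendsto
      (fun N : ℕ => (∑ i ∈ range N, (X i ω - m) ^ j) / N) atTop (𝓝 (M j)) :=
    (eventually_all_finite (Set.finite_le_nat 4)).2 fun j hj =>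
      strong_law_ae_comp hindep hident (φ := fun u => (u - m) ^ j) (by fun_prop)
        (hX4.integrable_sub_const_pow m hj)
  have hM0 : M 0 = 1 := by simp [hM]
  have hM1 : M 1 = 0 := by
    simp only [hM, pow_one]
    rw [integral_sub (hX4.integrable (by norm_num)) (integrable_const m), integral_const, ← hm]
    simp
  have hM2 : M 2 = σ2 := hσ2.symm
  have hM3 : M 3 = m3 := hm3.symm
  have hM4 : M 4 - M 2 ^ 2 = ν2 := by rw [hM2]; exact hν2.symm
  filter_upwards [hslln] with ω hω
  have hρhat := tendsto_rhoHat hh T hω hM0 hM1 (hM2 ▸ hσ2pos) (hM4 ▸ hν2pos)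
  rw [hM4, hM2, hM3, ← hρ] at hρhat
  exact tendsto_iSup_abs_sub_of_tendsto_prod_s3 (f := fun n t => rhoHat n h t fun i => X i ω) hρhat

/-- For i.i.d. random variables with finite fourth moment, positive variance and
positive `ν²`, the local correlation estimator `ρ̂_n(t)` converges almost surely
to `ρ = μ^{3}/(σν)`, uniformly over `t ∈ [h, T-h]`. -/
theorem rhoHat_uniform_slln
    {Ω : Type*} [MeasurableSpace Ω] (μ : Measure Ω) [IsProbabilityMeasure μ]
    (X : ℕ → Ω → ℝ)
    (hmeas : ∀ i, Measurable (X i))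
    (hindep : iIndepFun X μ)
    (hident : ∀ i, IdentDistrib (X i) (X 0) μ μ)
    (hint4 : Integrable (fun ω => (X 0 ω) ^ 4) μ)
    (h T : ℝ) (hh : 0 < h) (hT : 2 * h ≤ T)
    (m σ2 m3 ν2 ρ : ℝ)
    (hm : m = ∫ ω, X 0 ω ∂μ)
    (hσ2 : σ2 = ∫ ω, (X 0 ω - m) ^ 2 ∂μ)
    (hm3 : m3 = ∫ ω, (X 0 ω - m) ^ 3 ∂μ)
    (hν2 : ν2 = (∫ ω, (X 0 ω - m) ^ 4 ∂μ) - σ2 ^ 2)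
    (hσ2pos : 0 < σ2) (hν2pos : 0 < ν2)
    (hρ : ρ = m3 / (Real.sqrt σ2 * Real.sqrt ν2)) :
    ∀ᵐ ω ∂μ,
      Tendsto
        (fun n : ℕ =>
          ⨆ t : Set.Icc h (T - h), |rhoHat n h (t : ℝ) (fun i => X i ω) - ρ|)
        atTop (nhds 0) :=
  rhoHat_uniform_slln_general μ X hindep hident hint4 h T hh m σ2 m3 ν2 ρ hm hσ2 hm3 hν2 hσ2pos
    hν2pos hρ
end

section
/- Let (X_{1,i})_{i≥1} and (X_{2,i})_{i≥1} be independent sequences of i.i.d. integrable real random variables with means μ₁ and μ₂. Fix reals h > 0 and c ≥ h. For n ≥ 1 define the compound sequence Z^{(n)}_i = X_{1,i} for i ≤ ⌊nc⌋ and Z^{(n)}_i = X_{2,i} for i > ⌊nc⌋, and for t ∈ [c, c+h] the left-window mean μ̂^{(n)}_ℓ(t) = (1/(nh)) ∑_{i=⌊n(t−h)⌋+1}^{⌊nt⌋} Z^{(n)}_i. Then sup_{t ∈ [c, c+h]} | μ̂^{(n)}_ℓ(t) − ( ((c−(t−h))/h)·μ₁ + ((t−c)/h)·μ₂ ) | →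 0 almost surely as n → ∞; that is, the windowed mean converges uniformly to the linear interpolation between μ₁ and μ₂ determined by the overlap of the window with the change point c. -/
/-!
By the strong law of large numbers, the partial sums of each i.i.d. sequence satisfy
`∑_{i<k} X_i = k μ + o(k)` almost surely, and an `o(k)` error is automatically `o(N)` uniformly
over `k ≤ N`. The window `[⌊n(t-h)⌋, ⌊nt⌋)` splits at `⌊nc⌋` into two differences of partial
sums, one per sequence; their leading terms are the interpolation up to the floor rounding,
which costs at most `|μ₁| + |μ₂|`, and the four `o(n)` errors are uniform in `t` because every
index involved is at most `⌊n(c+h)⌋`.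
-/

open MeasureTheory ProbabilityTheory Filter Finset Asymptotics Topology

noncomputable def partialSumError (x : ℕ → ℝ) (m : ℝ) (k : ℕ) : ℝ :=
  ∑ i ∈ range k, x i - k * m

lemma abs_floor_sub_floor_sub_sub_le_one {x y : ℝ} (hx : 0 ≤ x) (hy : 0 ≤ y) :
    |((⌊y⌋₊ : ℝ) - ⌊x⌋₊) - (y - x)| ≤ 1 := by
  rw [abs_le]
  constructor <;>
    linarith [Nat.floor_le hx, Nat.floor_le hy, Nat.lt_floor_add_one x, Nat.lt_floor_add_one y]

lemma sum_Ico_ite_lt {M : Type*} [AddCommGroup M] (x y : ℕ → M) {a m b : ℕ}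
    (ham : a ≤ m) (hmb : m ≤ b) :
    ∑ i ∈ Ico a b, (if i < m then x i else y i)
      = (∑ i ∈ range m, x i - ∑ i ∈ range a, x i)
        + (∑ i ∈ range b, y i - ∑ i ∈ range m, y i) := by
  rw [← sum_Ico_consecutive _ ham hmb, ← sum_Ico_eq_sub _ ham, ← sum_Ico_eq_sub _ hmb]
  congr 1
  · exact sum_congr rfl fun i hi => if_pos (mem_Ico.1 hi).2
  · exact sum_congr rfl fun i hi => if_neg (not_lt.2 (mem_Ico.1 hi).1)

lemma Asymptotics.IsLittleO.eventually_forall_le_abs_le_mul {E : ℕ → ℝ}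
    (hE : E =o[atTop] (fun k : ℕ => (k : ℝ))) {ε : ℝ} (hε : 0 < ε) :
    ∀ᶠ N : ℕ in atTop, ∀ k ≤ N, |E k| ≤ ε * N := by
  obtain ⟨K, hK⟩ := eventually_atTop.1 (hE.bound hε)
  have hsmall : ∀ k < K, |E k| ≤ ∑ j ∈ range K, |E j| := fun k hk =>
    single_le_sum (f := fun j => |E j|) (fun _ _ => abs_nonneg _) (mem_range.2 hk)
  filter_upwards [(tendsto_natCast_atTop_atTop.const_mul_atTop hε).eventually_ge_atTop
    (∑ j ∈ range K, |E j|)] with N hN k hkN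
  rcases lt_or_ge k K with hk | hk
  · exact (hsmall k hk).trans hN
  · have hEk : |E k| ≤ ε * k := by simpa using hK k hk
    exact hEk.trans (by gcongr)

lemma ae_partialSumError_isLittleO {Ω : Type*} [MeasurableSpace Ω] {μ : Measure Ω}
    {Y : ℕ → Ω → ℝ} (hint : Integrable (Y 0) μ)
    (hindep : Pairwise (Function.onFun (IndepFun · · μ) Y))
    (hident : ∀ i, IdentDistrib (Y i) (Y 0) μ μ) :
    ∀ᵐ ω ∂μ, partialSumError (Y · ω) (∫ ω, Y 0 ω ∂μ) =o[atTop] (fun k : ℕ => (k : ℝ)) := by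
  filter_upwards [strong_law_ae_real Y hint hindep hident] with ω hω
  rw [isLittleO_iff_tendsto'
    (.of_forall fun k hk => by simp [partialSumError, Nat.cast_eq_zero.1 hk])]
  refine (sub_self (∫ ω, Y 0 ω ∂μ) ▸ hω.sub_const (∫ ω, Y 0 ω ∂μ)).congr' ?_
  filter_upwards [eventually_ne_atTop 0] with k hk
  simp [partialSumError, sub_div, hk]

lemma abs_sum_Ico_floor_ite_sub_le (x y : ℕ → ℝ) (μ1 μ2 : ℝ) {p q r : ℝ} (hp : 0 ≤ p)
    (hpq : p ≤ q) (hqr : q ≤ r) :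
    |∑ i ∈ Ico ⌊p⌋₊ ⌊r⌋₊, (if i < ⌊q⌋₊ then x i else y i) - ((q - p) * μ1 + (r - q) * μ2)|
      ≤ |μ1| + |μ2| + (|partialSumError x μ1 ⌊q⌋₊| + |partialSumError x μ1 ⌊p⌋₊|)
        + (|partialSumError y μ2 ⌊r⌋₊| + |partialSumError y μ2 ⌊q⌋₊|) := by
  have hq : 0 ≤ q := hp.trans hpq
  have hx : |((⌊q⌋₊ : ℝ) - ⌊p⌋₊ - (q - p)) * μ1| ≤ |μ1| := by
    rw [abs_mul]
    exact mul_le_of_le_one_left (abs_nonneg _) (abs_floor_sub_floor_sub_sub_le_one hp hq)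
  have hy : |((⌊r⌋₊ : ℝ) - ⌊q⌋₊ - (r - q)) * μ2| ≤ |μ2| := by
    rw [abs_mul]
    exact mul_le_of_le_one_left (abs_nonneg _)
      (abs_floor_sub_floor_sub_sub_le_one hq (hq.trans hqr))
  rw [sum_Ico_ite_lt x y (Nat.floor_mono hpq) (Nat.floor_mono hqr)]
  calc _ = |((⌊q⌋₊ : ℝ) - ⌊p⌋₊ - (q - p)) * μ1 + ((⌊r⌋₊ : ℝ) - ⌊q⌋₊ - (r - q)) * μ2
          + (partialSumError x μ1 ⌊q⌋₊ - partialSumError x μ1 ⌊p⌋₊)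
          + (partialSumError y μ2 ⌊r⌋₊ - partialSumError y μ2 ⌊q⌋₊)| := by
        congr 1; unfold partialSumError; ring
    _ ≤ _ := by
        simp only [← Real.norm_eq_abs]
        refine norm_add₄_le.trans ?_
        simp only [Real.norm_eq_abs]
        gcongr
        exacts [abs_sub _ _, abs_sub _ _]

lemma abs_windowMean_sub_interpolation_le (x y : ℕ → ℝ) (μ1 μ2 : ℝ) {h c t : ℝ} (hh : 0 < h)
    (hc : h ≤ c) (ht : t ∈ Set.Icc c (c + h)) {n : ℕ} (hn : 0 < n) {B : ℝ}
    (hx : ∀ k ≤ ⌊(n : ℝ) * (c + h)⌋₊, |partialSumError x μ1 k| ≤ B)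
    (hy : ∀ k ≤ ⌊(n : ℝ) * (c + h)⌋₊, |partialSumError y μ2 k| ≤ B) :
    |(∑ i ∈ Ico ⌊(n : ℝ) * (t - h)⌋₊ ⌊(n : ℝ) * t⌋₊,
        if i < ⌊(n : ℝ) * c⌋₊ then x i else y i) / (n * h)
      - ((c - (t - h)) / h * μ1 + (t - c) / h * μ2)|
      ≤ (|μ1| + |μ2| + 4 * B) / (n * h) := by
  obtain ⟨htc, htch⟩ := ht
  have hnh : (0 : ℝ) < n * h := by positivity
  have hnc : (n : ℝ) * c ≤ n * t := by gcongr
  have hnt : (n : ℝ) * t ≤ n * (c + h) := by gcongr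
  have hwindow := abs_sum_Ico_floor_ite_sub_le x y μ1 μ2
    (mul_nonneg n.cast_nonneg (sub_nonneg.2 (hc.trans htc))) (by gcongr; linarith) hnc
  have hscale : (∑ i ∈ Ico ⌊(n : ℝ) * (t - h)⌋₊ ⌊(n : ℝ) * t⌋₊,
        if i < ⌊(n : ℝ) * c⌋₊ then x i else y i) / (n * h)
      - ((c - (t - h)) / h * μ1 + (t - c) / h * μ2)
      = (∑ i ∈ Ico ⌊(n : ℝ) * (t - h)⌋₊ ⌊(n : ℝ) * t⌋₊,
          (if i < ⌊(n : ℝ) * c⌋₊ then x i else y i)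
        - ((n * c - n * (t - h)) * μ1 + (n * t - n * c) * μ2)) / (n * h) := by
    field_simp
  rw [hscale, abs_div, abs_of_pos hnh, div_le_div_iff_of_pos_right hnh]
  have hp := hx _ (Nat.floor_mono (show (n : ℝ) * (t - h) ≤ n * (c + h) by gcongr; linarith))
  have hq := hx _ (Nat.floor_mono (hnc.trans hnt))
  have hq' := hy _ (Nat.floor_mono (hnc.trans hnt))
  have hr := hy _ (Nat.floor_mono hnt)
  linarith

theorem tendsto_iSup_abs_windowMean_sub_interpolation (x y : ℕ → ℝ) (μ1 μ2 : ℝ)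
    (hx : partialSumError x μ1 =o[atTop] (fun k : ℕ => (k : ℝ)))
    (hy : partialSumError y μ2 =o[atTop] (fun k : ℕ => (k : ℝ))) {h c : ℝ} (hh : 0 < h)
    (hc : h ≤ c) :
    Tendsto (fun n : ℕ => ⨆ t : Set.Icc c (c + h),
      |(∑ i ∈ Ico ⌊(n : ℝ) * ((t : ℝ) - h)⌋₊ ⌊(n : ℝ) * (t : ℝ)⌋₊,
          if i < ⌊(n : ℝ) * c⌋₊ then x i else y i) / (n * h)
        - ((c - ((t : ℝ) - h)) / h * μ1 + ((t : ℝ) - c) / h * μ2)|) atTop (𝓝 0) := by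
  have hch : 0 < c + h := by linarith
  have : Nonempty (Set.Icc c (c + h)) := ⟨⟨c, le_rfl, by linarith⟩⟩
  rw [NormedAddGroup.tendsto_nhds_zero]
  intro ε hε
  set δ := ε * h / (8 * (c + h)) with hδ_def
  have hδ : 0 < δ := by positivity
  have hfloor : Tendsto (fun n : ℕ => ⌊(n : ℝ) * (c + h)⌋₊) atTop atTop :=
    tendsto_nat_floor_atTop.comp (tendsto_natCast_atTop_atTop.atTop_mul_const hch)
  have hmean : Tendsto (fun n : ℕ => (|μ1| + |μ2|) / (n * h)) atTop (𝓝 0) :=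
    tendsto_const_nhds.div_atTop (tendsto_natCast_atTop_atTop.atTop_mul_const hh)
  filter_upwards [hfloor.eventually (hx.eventually_forall_le_abs_le_mul hδ),
    hfloor.eventually (hy.eventually_forall_le_abs_le_mul hδ),
    hmean.eventually (gt_mem_nhds (half_pos hε)), eventually_gt_atTop 0] with n hxn hyn hmn hn
  have hB : δ * ⌊(n : ℝ) * (c + h)⌋₊ ≤ δ * (n * (c + h)) := by
    gcongr
    exact Nat.floor_le (by positivity)
  rw [Real.norm_of_nonneg (Real.iSup_nonneg fun _ => abs_nonneg _)]
  refine (ciSup_le fun t => abs_windowMean_sub_interpolation_le x y μ1 μ2 hh hc t.2 hn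
    (fun k hk => (hxn k hk).trans hB) (fun k hk => (hyn k hk).trans hB)).trans_lt ?_
  have hnh : (0 : ℝ) < n * h := by positivity
  calc (|μ1| + |μ2| + 4 * (δ * (n * (c + h)))) / (n * h)
      = (|μ1| + |μ2|) / (n * h) + ε / 2 := by rw [hδ_def]; field_simp; ring
    _ < ε := by linarith

theorem windowed_mean_change_point_interpolation_general
    {Ω : Type*} [MeasurableSpace Ω] (μ : Measure Ω)
    (X : Bool → ℕ → Ω → ℝ)
    (hindep : iIndepFun (fun p : Bool × ℕ => X p.1 p.2) μ)
    (hident : ∀ u i, IdentDistrib (X u i) (X u 0) μ μ)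
    (hint : ∀ u, Integrable (X u 0) μ)
    (μ1 μ2 : ℝ)
    (hμ1 : μ1 = ∫ ω, X false 0 ω ∂μ)
    (hμ2 : μ2 = ∫ ω, X true 0 ω ∂μ)
    (h c : ℝ) (hh : 0 < h) (hc : h ≤ c)
    -- the compound (spliced) sequence: `X false` before the change point, `X true` after
    (Z : ℕ → ℕ → Ω → ℝ)
    (hZ : ∀ n i ω, Z n i ω =
      if i < ⌊(n : ℝ) * c⌋₊ then X false i ω else X true i ω) :
    ∀ᵐ ω ∂μ,
      Tendsto
        (fun n : ℕ =>
          ⨆ t : Set.Icc c (c + h),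
            |(∑ i ∈ Finset.Ico ⌊(n : ℝ) * ((t : ℝ) - h)⌋₊ ⌊(n : ℝ) * (t : ℝ)⌋₊,
                Z n i ω) / ((n : ℝ) * h)
              - (((c - ((t : ℝ) - h)) / h) * μ1 + (((t : ℝ) - c) / h) * μ2)|)
        atTop (nhds 0) := by
  have hpair (u : Bool) : Pairwise (Function.onFun (IndepFun · · μ) (X u)) :=
    fun i j hij => hindep.indepFun (i := (u, i)) (j := (u, j)) (by simpa using hij)
  filter_upwards [ae_partialSumError_isLittleO (hint false) (hpair false) (hident false),
    ae_partialSumError_isLittleO (hint true) (hpair true) (hident true)] with ω hpre hpost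
  simp only [hZ]
  subst hμ1 hμ2
  exact tendsto_iSup_abs_windowMean_sub_interpolation _ _ _ _ hpre hpost hh hc

/-- For two independent i.i.d. integrable sequences spliced at the change point
`⌊nc⌋` (here `X false` is the pre-change and `X true` the post-change sequence),
the left-window mean `(1/(nh)) ∑_{⌊n(t-h)⌋ < i ≤ ⌊nt⌋} Z^{(n)}_i` converges
almost surely, uniformly over `t ∈ [c, c+h]`, to the linear interpolation
`((c-(t-h))/h)·μ₁ + ((t-c)/h)·μ₂`. -/
theorem windowed_mean_change_point_interpolation
    {Ω : Type*} [MeasurableSpace Ω] (μ : Measure Ω) [IsProbabilityMeasure μ]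
    (X : Bool → ℕ → Ω → ℝ)
    (hmeas : ∀ u i, Measurable (X u i))
    (hindep : iIndepFun (fun p : Bool × ℕ => X p.1 p.2) μ)
    (hident : ∀ u i, IdentDistrib (X u i) (X u 0) μ μ)
    (hint : ∀ u, Integrable (X u 0) μ)
    (μ1 μ2 : ℝ)
    (hμ1 : μ1 = ∫ ω, X false 0 ω ∂μ)
    (hμ2 : μ2 = ∫ ω, X true 0 ω ∂μ)
    (h c : ℝ) (hh : 0 < h) (hc : h ≤ c)
    -- the compound (spliced) sequence: `X false` before the change point, `X true` after
    (Z : ℕ → ℕ → Ω → ℝ)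
    (hZ : ∀ n i ω, Z n i ω =
      if i < ⌊(n : ℝ) * c⌋₊ then X false i ω else X true i ω) :
    ∀ᵐ ω ∂μ,
      Tendsto
        (fun n : ℕ =>
          ⨆ t : Set.Icc c (c + h),
            |(∑ i ∈ Finset.Ico ⌊(n : ℝ) * ((t : ℝ) - h)⌋₊ ⌊(n : ℝ) * (t : ℝ)⌋₊,
                Z n i ω) / ((n : ℝ) * h)
              - (((c - ((t : ℝ) - h)) / h) * μ1 + (((t : ℝ) - c) / h) * μ2)|)
        atTop (nhds 0) :=
  windowed_mean_change_point_interpolation_general μ X hindep hident hint μ1 μ2 hμ1 hμ2 h c hh hc Z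
    hZ
end

section
/- Let (X_{1,i})_{i≥1} and (X_{2,i})_{i≥1} be independent sequences of i.i.d. real random variables with E[X_{u,1}²] < ∞, means μ_u and variances σ_u², u = 1, 2. Let (K_n) and (N_n) be sequences of natural numbers with K_n ≤ N_n, N_n → ∞ and K_n/N_n → θ for some θ ∈ [0,1]. For each n let μ̂_n and σ̂²_n be the empirical mean and empirical variance of the mixed sample X_{1,1},…,X_{1,K_n}, X_{2,1},…,X_{2,N_n−K_n}. Then almost surely, as n → ∞, μ̂_n → m̄ := θμ₁ + (1−θ)μ₂ and σ̂²_n → θ·[σ₁² + (m̄−μ₁)²] + (1−θ)·[σ₂² + (m̄−μ₂)²]. -/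
/-!
Split the mixed sample into its two blocks. Each block sum divided by `N_n` is a Cesàro mean of
one i.i.d. sequence (or of its squares) evaluated at time `K_n` (resp. `N_n - K_n`), rescaled by
the block fraction, and the strong law makes those Cesàro means converge almost surely. Since
`K_n` need not tend to infinity, the passage from `a m / m → L` to `a K_n / N_n → θ L` goes through
the uniform bound `|a m - L m| ≤ ε m + C_ε`. The empirical variance is the second empirical moment
minus the squared empirical mean, and `E[X²] = σ² + μ²` rearranges the limit into the stated form.
-/

open MeasureTheory ProbabilityTheory Filter Finset Topology Asymptotics

theorem Asymptotics.IsLittleO.exists_norm_le_mul_add {E : Type*} [SeminormedAddCommGroup E]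
    {b : ℕ → E} (hb : b =o[atTop] (fun m => (m : ℝ))) {c : ℝ} (hc : 0 < c) :
    ∃ C, ∀ m, ‖b m‖ ≤ c * m + C := by
  obtain ⟨M, hM⟩ := eventually_atTop.1 (hb.bound hc)
  refine ⟨∑ m ∈ range M, ‖b m‖, fun m => ?_⟩
  have hcm : 0 ≤ c * m := by positivity
  rcases lt_or_ge m M with hm | hm
  · linarith [single_le_sum (fun i _ => norm_nonneg (b i)) (mem_range.2 hm)]
  · have hbm := hM m hm
    rw [Real.norm_natCast] at hbm
    linarith [sum_nonneg fun i (_ : i ∈ range M) => norm_nonneg (b i)]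

theorem Asymptotics.IsLittleO.comp_le {α E : Type*} [SeminormedAddCommGroup E] {l : Filter α}
    {b : ℕ → E} (hb : b =o[atTop] (fun m => (m : ℝ))) {K N : α → ℕ} (hKN : ∀ x, K x ≤ N x)
    (hN : Tendsto N l atTop) : (fun x => b (K x)) =o[l] (fun x => (N x : ℝ)) := by
  refine IsLittleO.of_bound fun c hc => ?_
  obtain ⟨C, hC⟩ := hb.exists_norm_le_mul_add (half_pos hc)
  filter_upwards [(tendsto_natCast_atTop_atTop.comp hN).eventually_ge_atTop (2 * C / c)]
    with x hx
  have hK : (K x : ℝ) ≤ N x := by exact_mod_cast hKN x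
  have hCN : C ≤ c / 2 * N x := by
    rw [Function.comp_apply, div_le_iff₀ hc] at hx
    linarith
  calc ‖b (K x)‖ ≤ c / 2 * K x + C := hC _
    _ ≤ c / 2 * N x + c / 2 * N x := by gcongr
    _ = c * ‖(N x : ℝ)‖ := by rw [Real.norm_natCast]; ring

theorem Filter.Tendsto.div_comp_of_le {α : Type*} {l : Filter α} {a : ℕ → ℝ} {L θ : ℝ}
    (ha : Tendsto (fun m => a m / m) atTop (𝓝 L)) {K N : α → ℕ} (hKN : ∀ x, K x ≤ N x)
    (hN : Tendsto N l atTop) (hθ : Tendsto (fun x => (K x : ℝ) / N x) l (𝓝 θ)) :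
    Tendsto (fun x => a (K x) / N x) l (𝓝 (θ * L)) := by
  set b : ℕ → ℝ := fun m => a m - L * m
  have hb : b =o[atTop] (fun m => (m : ℝ)) := by
    have h0 : Tendsto (fun m => a m / m - L) atTop (𝓝 0) := by simpa using ha.sub_const L
    refine (isLittleO_iff_tendsto' ?_).2 (h0.congr' ?_) <;>
      filter_upwards [eventually_ne_atTop 0] with m hm
    · exact fun h => absurd h (Nat.cast_ne_zero.2 hm)
    · rw [div_sub' (Nat.cast_ne_zero.2 hm), mul_comm]
  have h := (hb.comp_le hKN hN).tendsto_div_nhds_zero.add (hθ.const_mul L)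
  rw [zero_add, mul_comm] at h
  exact h.congr fun x => by simp only [b]; ring

theorem Finset.sum_sub_sq {ι R : Type*} [CommRing R] (s : Finset ι) (f : ι → R) (c : R) :
    ∑ i ∈ s, (f i - c) ^ 2 = ∑ i ∈ s, f i ^ 2 - 2 * c * ∑ i ∈ s, f i + #s * c ^ 2 := by
  simp only [sub_sq, sum_add_distrib, sum_sub_distrib, sum_const, nsmul_eq_mul, ← sum_mul,
    ← mul_sum]
  ring

theorem mixed_variance_eq {x y : ℕ → ℝ} {k n : ℕ} (hkn : k ≤ n) (hn : n ≠ 0) {c : ℝ}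
    (hc : c = ((∑ i ∈ range k, x i) + ∑ i ∈ range (n - k), y i) / n) :
    ((∑ i ∈ range k, (x i - c) ^ 2) + ∑ i ∈ range (n - k), (y i - c) ^ 2) / n
      = ((∑ i ∈ range k, x i ^ 2) + ∑ i ∈ range (n - k), y i ^ 2) / n - c ^ 2 := by
  rw [eq_div_iff (Nat.cast_ne_zero.2 hn)] at hc
  rw [sum_sub_sq, sum_sub_sq, card_range, card_range, Nat.cast_sub hkn]
  field_simp
  linear_combination 2 * c * hc

section MixedSample

variable {x y : ℕ → ℝ} {K N : ℕ → ℕ} {θ m₁ m₂ : ℝ}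

theorem tendsto_sub_div_of_tendsto_div (hKN : ∀ n, K n ≤ N n) (hN : Tendsto N atTop atTop)
    (hθ : Tendsto (fun n => (K n : ℝ) / N n) atTop (𝓝 θ)) :
    Tendsto (fun n => ((N n - K n : ℕ) : ℝ) / N n) atTop (𝓝 (1 - θ)) := by
  refine (tendsto_const_nhds.sub hθ).congr' ?_
  filter_upwards [hN.eventually_ne_atTop 0] with n hn
  rw [Nat.cast_sub (hKN n), sub_div, div_self (Nat.cast_ne_zero.2 hn)]

theorem tendsto_mixed_mean
    (hx : Tendsto (fun k => (∑ i ∈ range k, x i) / k) atTop (𝓝 m₁))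
    (hy : Tendsto (fun k => (∑ i ∈ range k, y i) / k) atTop (𝓝 m₂))
    (hKN : ∀ n, K n ≤ N n) (hN : Tendsto N atTop atTop)
    (hθ : Tendsto (fun n => (K n : ℝ) / N n) atTop (𝓝 θ)) :
    Tendsto (fun n => ((∑ i ∈ range (K n), x i) + ∑ i ∈ range (N n - K n), y i) / N n) atTop
      (𝓝 (θ * m₁ + (1 - θ) * m₂)) := by
  simp only [add_div]
  exact (hx.div_comp_of_le hKN hN hθ).add
    (hy.div_comp_of_le (fun n => Nat.sub_le _ _) hN (tendsto_sub_div_of_tendsto_div hKN hN hθ))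

theorem tendsto_mixed_variance {v₁ v₂ m : ℝ} {c : ℕ → ℝ}
    (hx : Tendsto (fun k => (∑ i ∈ range k, x i) / k) atTop (𝓝 m₁))
    (hy : Tendsto (fun k => (∑ i ∈ range k, y i) / k) atTop (𝓝 m₂))
    (hx2 : Tendsto (fun k => (∑ i ∈ range k, x i ^ 2) / k) atTop (𝓝 (v₁ + m₁ ^ 2)))
    (hy2 : Tendsto (fun k => (∑ i ∈ range k, y i ^ 2) / k) atTop (𝓝 (v₂ + m₂ ^ 2)))
    (hKN : ∀ n, K n ≤ N n) (hN : Tendsto N atTop atTop)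
    (hθ : Tendsto (fun n => (K n : ℝ) / N n) atTop (𝓝 θ))
    (hc : ∀ n, c n = ((∑ i ∈ range (K n), x i) + ∑ i ∈ range (N n - K n), y i) / N n)
    (hm : m = θ * m₁ + (1 - θ) * m₂) :
    Tendsto (fun n =>
        ((∑ i ∈ range (K n), (x i - c n) ^ 2) + ∑ i ∈ range (N n - K n), (y i - c n) ^ 2) / N n)
      atTop (𝓝 (θ * (v₁ + (m - m₁) ^ 2) + (1 - θ) * (v₂ + (m - m₂) ^ 2))) := by
  have hmean : Tendsto c atTop (𝓝 m) :=
    hm ▸ (tendsto_mixed_mean hx hy hKN hN hθ).congr fun n => (hc n).symm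
  have hlim : θ * (v₁ + (m - m₁) ^ 2) + (1 - θ) * (v₂ + (m - m₂) ^ 2)
      = θ * (v₁ + m₁ ^ 2) + (1 - θ) * (v₂ + m₂ ^ 2) - m ^ 2 := by
    rw [hm]; ring
  rw [hlim]
  refine ((tendsto_mixed_mean hx2 hy2 hKN hN hθ).sub (hmean.pow 2)).congr' ?_
  filter_upwards [hN.eventually_ne_atTop 0] with n hn
  rw [mixed_variance_eq (hKN n) hn (hc n)]

end MixedSample

theorem ProbabilityTheory.strong_law_ae_real_comp {Ω β : Type*} [MeasurableSpace Ω]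
    [MeasurableSpace β] {μ : Measure Ω} {X : ℕ → Ω → β}
    (hindep : Pairwise (Function.onFun (IndepFun · · μ) X))
    (hident : ∀ i, IdentDistrib (X i) (X 0) μ μ)
    {f : β → ℝ} (hf : Measurable f) (hint : Integrable (f ∘ X 0) μ) :
    ∀ᵐ ω ∂μ, Tendsto (fun n : ℕ => (∑ i ∈ range n, f (X i ω)) / n) atTop (𝓝 μ[f ∘ X 0]) :=
  strong_law_ae_real (fun i => f ∘ X i) hint (fun _ _ hij => (hindep hij).comp hf hf)
    (fun i => (hident i).comp hf)

theorem ProbabilityTheory.integral_sq_eq_integral_sub_sq_add_sq {Ω : Type*} [MeasurableSpace Ω]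
    {μ : Measure Ω} [IsProbabilityMeasure μ] {X : Ω → ℝ} (hX : MemLp X 2 μ) :
    ∫ ω, X ω ^ 2 ∂μ = ∫ ω, (X ω - μ[X]) ^ 2 ∂μ + μ[X] ^ 2 := by
  rw [← variance_eq_integral hX.aemeasurable, variance_eq_sub hX]
  simp only [Pi.pow_apply, sub_add_cancel]

theorem mixed_sample_slln_general
    {Ω : Type*} [MeasurableSpace Ω] (μ : Measure Ω) [IsProbabilityMeasure μ]
    (X : Bool → ℕ → Ω → ℝ)
    (hmeas : ∀ u i, Measurable (X u i))
    (hindep : iIndepFun (fun p : Bool × ℕ => X p.1 p.2) μ)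
    (hident : ∀ u i, IdentDistrib (X u i) (X u 0) μ μ)
    (hint2 : ∀ u, Integrable (fun ω => (X u 0 ω) ^ 2) μ)
    (μ1 μ2 σ1sq σ2sq : ℝ)
    (hμ1 : μ1 = ∫ ω, X false 0 ω ∂μ)
    (hμ2 : μ2 = ∫ ω, X true 0 ω ∂μ)
    (hσ1 : σ1sq = ∫ ω, (X false 0 ω - μ1) ^ 2 ∂μ)
    (hσ2 : σ2sq = ∫ ω, (X true 0 ω - μ2) ^ 2 ∂μ)
    (K N : ℕ → ℕ) (hKN : ∀ n, K n ≤ N n)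
    (hN : Tendsto N atTop atTop)
    (θ : ℝ)
    (hθ : Tendsto (fun n => (K n : ℝ) / (N n : ℝ)) atTop (nhds θ))
    (muHat s2Hat : ℕ → Ω → ℝ)
    (hmuHat : ∀ n ω, muHat n ω =
      ((∑ i ∈ Finset.range (K n), X false i ω)
        + ∑ i ∈ Finset.range (N n - K n), X true i ω) / (N n : ℝ))
    (hs2Hat : ∀ n ω, s2Hat n ω =
      ((∑ i ∈ Finset.range (K n), (X false i ω - muHat n ω) ^ 2)
        + ∑ i ∈ Finset.range (N n - K n), (X true i ω - muHat n ω) ^ 2) / (N n : ℝ))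
    (mbar : ℝ) (hmbar : mbar = θ * μ1 + (1 - θ) * μ2) :
    ∀ᵐ ω ∂μ,
      Tendsto (fun n => muHat n ω) atTop (nhds mbar) ∧
      Tendsto (fun n => s2Hat n ω) atTop
        (nhds (θ * (σ1sq + (mbar - μ1) ^ 2) + (1 - θ) * (σ2sq + (mbar - μ2) ^ 2))) := by
  have hL2 : ∀ u, MemLp (X u 0) 2 μ := fun u =>
    (memLp_two_iff_integrable_sq (hmeas u 0).aestronglyMeasurable).2 (hint2 u)
  have hslln : ∀ u (f : ℝ → ℝ), Measurable f → Integrable (f ∘ X u 0) μ → ∀ᵐ ω ∂μ,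
      Tendsto (fun n : ℕ => (∑ i ∈ range n, f (X u i ω)) / n) atTop (𝓝 μ[f ∘ X u 0]) :=
    fun u f hf hint => strong_law_ae_real_comp
      (fun i j hij => hindep.indepFun (i := (u, i)) (j := (u, j)) (by simpa using hij))
      (hident u) hf hint
  filter_upwards [hslln false (·) measurable_id (MemLp.integrable one_le_two (hL2 false)),
    hslln true (·) measurable_id (MemLp.integrable one_le_two (hL2 true)),
    hslln false (· ^ 2) (measurable_id.pow_const 2) (hint2 false),
    hslln true (· ^ 2) (measurable_id.pow_const 2) (hint2 true)] with ω hx hy hx2 hy2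
  simp only [Function.comp_def] at hx hy hx2 hy2
  rw [integral_sq_eq_integral_sub_sq_add_sq (hL2 false)] at hx2
  rw [integral_sq_eq_integral_sub_sq_add_sq (hL2 true)] at hy2
  subst hμ1 hμ2 hσ1 hσ2
  refine ⟨hmbar ▸ (tendsto_mixed_mean hx hy hKN hN hθ).congr fun n => (hmuHat n ω).symm, ?_⟩
  exact (tendsto_mixed_variance hx hy hx2 hy2 hKN hN hθ (hmuHat · ω) hmbar).congr
    fun n => (hs2Hat n ω).symm

/-- Strong law of large numbers for the empirical mean and empirical variance of
a mixed sample `X_{1,1},…,X_{1,K_n}, X_{2,1},…,X_{2,N_n-K_n}` drawn from two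
independent i.i.d. square-integrable sequences (`X false` the first, `X true`
the second): if `K_n/N_n → θ ∈ [0,1]` and `N_n → ∞`, then almost surely
`μ̂_n → m̄ = θμ₁ + (1-θ)μ₂` and
`σ̂²_n → θ[σ₁² + (m̄-μ₁)²] + (1-θ)[σ₂² + (m̄-μ₂)²]`. -/
theorem mixed_sample_slln
    {Ω : Type*} [MeasurableSpace Ω] (μ : Measure Ω) [IsProbabilityMeasure μ]
    (X : Bool → ℕ → Ω → ℝ)
    (hmeas : ∀ u i, Measurable (X u i))
    (hindep : iIndepFun (fun p : Bool × ℕ => X p.1 p.2) μ)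
    (hident : ∀ u i, IdentDistrib (X u i) (X u 0) μ μ)
    (hint2 : ∀ u, Integrable (fun ω => (X u 0 ω) ^ 2) μ)
    (μ1 μ2 σ1sq σ2sq : ℝ)
    (hμ1 : μ1 = ∫ ω, X false 0 ω ∂μ)
    (hμ2 : μ2 = ∫ ω, X true 0 ω ∂μ)
    (hσ1 : σ1sq = ∫ ω, (X false 0 ω - μ1) ^ 2 ∂μ)
    (hσ2 : σ2sq = ∫ ω, (X true 0 ω - μ2) ^ 2 ∂μ)
    (K N : ℕ → ℕ) (hKN : ∀ n, K n ≤ N n)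
    (hN : Tendsto N atTop atTop)
    (θ : ℝ) (hθmem : θ ∈ Set.Icc (0 : ℝ) 1)
    (hθ : Tendsto (fun n => (K n : ℝ) / (N n : ℝ)) atTop (nhds θ))
    (muHat s2Hat : ℕ → Ω → ℝ)
    (hmuHat : ∀ n ω, muHat n ω =
      ((∑ i ∈ Finset.range (K n), X false i ω)
        + ∑ i ∈ Finset.range (N n - K n), X true i ω) / (N n : ℝ))
    (hs2Hat : ∀ n ω, s2Hat n ω =
      ((∑ i ∈ Finset.range (K n), (X false i ω - muHat n ω) ^ 2)
        + ∑ i ∈ Finset.range (N n - K n), (X true i ω - muHat n ω) ^ 2) / (N n : ℝ))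
    (mbar : ℝ) (hmbar : mbar = θ * μ1 + (1 - θ) * μ2) :
    ∀ᵐ ω ∂μ,
      Tendsto (fun n => muHat n ω) atTop (nhds mbar) ∧
      Tendsto (fun n => s2Hat n ω) atTop
        (nhds (θ * (σ1sq + (mbar - μ1) ^ 2) + (1 - θ) * (σ2sq + (mbar - μ2) ^ 2))) :=
  mixed_sample_slln_general μ X hmeas hindep hident hint2 μ1 μ2 σ1sq σ2sq hμ1 hμ2 hσ1 hσ2 K N hKN hN
    θ hθ muHat s2Hat hmuHat hs2Hat mbar hmbar
end

section
/- Fix reals h > 0, a change point c, and population parameters μ₁, μ₂, σ₁², σ₂² with the deterministic limit functions of the windowed estimators defined as follows: for t ∈ [c, c+h), μ̃_ℓ(t) = ((c−(t−h))/h)μ₁ + ((t−c)/h)μ₂ and σ̃²_ℓ(t) = ((c−(t−h))/h)[σ₁² + (μ̃_ℓ(t)−μ₁)²] + ((t−c)/h)[σ₂² + (μ̃_ℓ(t)−μ₂)²], with μ̃_ℓ(t) = μ₁, σ̃²_ℓ(t) = σ₁² for t < c and μ̃_ℓ(t) = μ₂, σ̃²_ℓ(t) = σ₂² for t ≥ c+h;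 and μ̃_r(t), σ̃²_r(t) defined by the same formulas with t replaced by t+h (so for t ∈ [c−h, c), μ̃_r(t) = ((c−t)/h)μ₁ + ((t+h−c)/h)μ₂, etc.). If μ₁ = μ₂, then: (i) μ̃_r(t) = μ̃_ℓ(t) for all t, so the centering of the expectation statistic, e(t) ∝ μ̃_r(t) − μ̃_ℓ(t), vanishes identically, regardless of the values of σ₁², σ₂²; and (ii) for all t ∈ [c−h, c+h], σ̃²_r(t) − σ̃²_ℓ(t) = ((h − |t−c|)/h)·(σ₂² − σ₁²), i.e. the centering of the variance statistic has a hat shape peaking at t = c with peak value σ₂² − σ₁². -/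
/-- Deterministic limit `μ̃_ℓ(t)` of the left-window mean for a single change
point at `c`: `μ₁` before the window reaches `c`, the linear interpolation
`((c-(t-h))/h)μ₁ + ((t-c)/h)μ₂` while the window `(t-h, t]` overlaps `c`, and
`μ₂` afterwards. -/
noncomputable def tildeMuL (h c μ1 μ2 t : ℝ) : ℝ :=
  if t < c then μ1
  else if t < c + h then ((c - (t - h)) / h) * μ1 + ((t - c) / h) * μ2
  else μ2

/-- Deterministic limit `σ̃²_ℓ(t)` of the left-window empirical variance for a
single change point at `c`, with populations `(μ₁, σ₁²)` and `(μ₂, σ₂²)`. -/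
noncomputable def tildeSigL (h c μ1 μ2 s1 s2 t : ℝ) : ℝ :=
  if t < c then s1
  else if t < c + h then
    ((c - (t - h)) / h) * (s1 + (tildeMuL h c μ1 μ2 t - μ1) ^ 2)
      + ((t - c) / h) * (s2 + (tildeMuL h c μ1 μ2 t - μ2) ^ 2)
  else s2

/-- Deterministic limit `μ̃_r(t) = μ̃_ℓ(t+h)` of the right-window mean. -/
noncomputable def tildeMuR (h c μ1 μ2 t : ℝ) : ℝ := tildeMuL h c μ1 μ2 (t + h)

/-- Deterministic limit `σ̃²_r(t) = σ̃²_ℓ(t+h)` of the right-window empirical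
variance. -/
noncomputable def tildeSigR (h c μ1 μ2 s1 s2 t : ℝ) : ℝ :=
  tildeSigL h c μ1 μ2 s1 s2 (t + h)

/-!
When `μ₁ = μ₂` the mean limits are constant, so every squared-bias term in `σ̃²_ℓ` vanishes and
`σ̃²_ℓ(t) = σ₁² + ρ((t - c)/h) (σ₂² - σ₁²)` for the clamped ramp `ρ x = max 0 (min 1 x)`.
The right window shifts the ramp argument by one, and `ρ (x + 1) - ρ x = 1 - |x|` on `[-1, 1]`.
-/

lemma tildeMuL_self {h : ℝ} (hh : h ≠ 0) (c μ t : ℝ) : tildeMuL h c μ μ t = μ := by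
  unfold tildeMuL
  split_ifs
  · rfl
  · field_simp
    ring
  · rfl

lemma tildeSigL_self {h : ℝ} (hh : 0 < h) (c μ s1 s2 t : ℝ) :
    tildeSigL h c μ μ s1 s2 t = s1 + max 0 (min 1 ((t - c) / h)) * (s2 - s1) := by
  unfold tildeSigL
  simp only [tildeMuL_self hh.ne', sub_self, ne_eq, OfNat.ofNat_ne_zero, not_false_eq_true,
    zero_pow, add_zero]
  split_ifs with hc hch
  · have : (t - c) / h < 0 := div_neg_of_neg_of_pos (by linarith) hh
    rw [max_eq_left (by simp [this.le])]
    ring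
  · have h0 : 0 ≤ (t - c) / h := div_nonneg (by linarith) hh.le
    have h1 : (t - c) / h < 1 := (div_lt_one hh).2 (by linarith)
    rw [min_eq_right h1.le, max_eq_right h0]
    field_simp
    ring
  · have : 1 ≤ (t - c) / h := (one_le_div hh).2 (by linarith)
    rw [min_eq_left this, max_eq_right zero_le_one]
    ring

lemma max_zero_min_one_add_one_sub {x : ℝ} (hx : |x| ≤ 1) :
    max 0 (min 1 (x + 1)) - max 0 (min 1 x) = 1 - |x| := by
  obtain ⟨hx₁, hx₂⟩ := abs_le.1 hx
  rcases le_total x 0 with hx0 | hx0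
  · rw [min_eq_right (by linarith), max_eq_right (by linarith),
      max_eq_left (min_le_of_right_le hx0), abs_of_nonpos hx0]
    ring
  · rw [min_eq_left (by linarith), min_eq_right hx₂, max_eq_right zero_le_one,
      max_eq_right hx0, abs_of_nonneg hx0]

/-- If the expectation does not change (`μ₁ = μ₂`), then (i) the centering of
the expectation statistic vanishes identically, `μ̃_r(t) = μ̃_ℓ(t)` for all `t`,
regardless of `σ₁², σ₂²`; and (ii) the centering of the variance statistic has
hat shape: `σ̃²_r(t) - σ̃²_ℓ(t) = ((h - |t-c|)/h)(σ₂² - σ₁²)` for all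
`t ∈ [c-h, c+h]`, peaking at `t = c` with peak value `σ₂² - σ₁²`. -/
theorem centering_no_mean_change
    (h c μ1 μ2 s1 s2 : ℝ) (hh : 0 < h) (hmean : μ1 = μ2) :
    (∀ t : ℝ, tildeMuR h c μ1 μ2 t = tildeMuL h c μ1 μ2 t) ∧
    (∀ t ∈ Set.Icc (c - h) (c + h),
      tildeSigR h c μ1 μ2 s1 s2 t - tildeSigL h c μ1 μ2 s1 s2 t
        = ((h - |t - c|) / h) * (s2 - s1)) := by
  subst hmean
  refine ⟨fun t => by rw [tildeMuR, tildeMuL_self hh.ne', tildeMuL_self hh.ne'], ?_⟩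
  rintro t ⟨htl, htr⟩
  have hx : |(t - c) / h| ≤ 1 := by
    rw [abs_div, abs_of_pos hh, div_le_one hh, abs_le]
    constructor <;> linarith
  have hshift : (t + h - c) / h = (t - c) / h + 1 := by
    field_simp
    ring
  calc tildeSigR h c μ1 μ1 s1 s2 t - tildeSigL h c μ1 μ1 s1 s2 t
      = (max 0 (min 1 ((t - c) / h + 1)) - max 0 (min 1 ((t - c) / h))) * (s2 - s1) := by
        rw [tildeSigR, tildeSigL_self hh, tildeSigL_self hh, hshift]
        ring
    _ = (1 - |(t - c) / h|) * (s2 - s1) := by rw [max_zero_min_one_add_one_sub hx]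
    _ = ((h - |t - c|) / h) * (s2 - s1) := by
        rw [abs_div, abs_of_pos hh]
        field_simp
end
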